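/- arXiv:2402.10322 — 9 statements merged into one kernel-verified Lean document; each statement's English description precedes it below -/
import Mathlib

section
/- Let n ≥ 1, let R be a commutative ring, and let θ_0, θ_1, …, θ_n ∈ R. Let K(θ) be the n×n symmetric matrix with rows and columns indexed by {1,…,n}, with entries K(θ)_{ii} = θ_i · ∑_{t ∈ {0,…,n}, t ≠ i} θ_t and K(θ)_{ij} = −θ_i θ_j for i ≠ j. Then det K(θ) = (∏_{i=0}^n θ_i) · (∑_{i=0}^n θ_i)^{n−1}. -/
/-!
Writing `S = ∑ θ_t`, the matrix factors as `K(θ) = diag(θ_1, …, θ_n) · (S·I − 𝟙 θ'ᵀ)` with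
`θ' = (θ_1, …, θ_n)`. The second factor is a scalar minus a rank-one matrix, so its determinant
is `S^(n-1) (S − ∑_{i ≥ 1} θ_i) = S^(n-1) θ_0`.
-/

open Matrix Finset

theorem Matrix.det_scalar_sub_vecMulVec {n R : Type*} [Fintype n] [DecidableEq n] [Nonempty n]
    [CommRing R] (t : R) (u v : n → R) :
    (scalar n t - vecMulVec u v).det = t ^ (Fintype.card n - 1) * (t - u ⬝ᵥ v) := by
  rw [← eval_charpoly, charpoly_vecMulVec]
  simp only [Polynomial.eval_sub, Polynomial.eval_pow, Polynomial.eval_X, Polynomial.eval_smul,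
    smul_eq_mul]
  rw [← mul_pow_sub_one Fintype.card_ne_zero]
  ring

/-- **Cayley–Prüfer formula for the star tree** (Corollary 5 / Eq. (13)).
`K(θ)` is the concentration matrix of the Brownian motion tree model on the
star tree with leaves `0, 1, …, n` (root leaf `0`), in the path
parametrization: `K(θ)_{ii} = θ_i · ∑_{t ≠ i} θ_t` and
`K(θ)_{ij} = −θ_i θ_j` for `i ≠ j` (indices `1, …, n` realized as `Fin n`
via `i ↦ i.succ : Fin (n+1)`).  Then
`det K(θ) = (∏_{i=0}^n θ_i) · (∑_{i=0}^n θ_i)^{n−1}`. -/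
theorem star_tree_det {n : ℕ} (hn : 1 ≤ n) {R : Type*} [CommRing R]
    (θ : Fin (n + 1) → R) :
    (Matrix.of fun i j : Fin n =>
      if i = j then θ i.succ * ∑ t ∈ Finset.univ.erase i.succ, θ t
      else -(θ i.succ * θ j.succ)).det
    = (∏ i, θ i) * (∑ i, θ i) ^ (n - 1) := by
  have : Nonempty (Fin n) := ⟨⟨0, hn⟩⟩
  have hfactor : (Matrix.of fun i j : Fin n =>
      if i = j then θ i.succ * ∑ t ∈ Finset.univ.erase i.succ, θ t
      else -(θ i.succ * θ j.succ))
      = diagonal (fun i => θ i.succ) *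
          (scalar (Fin n) (∑ i, θ i) - vecMulVec 1 (fun j => θ j.succ)) := by
    ext i j
    rw [diagonal_mul, scalar_apply, Matrix.sub_apply, diagonal_apply, vecMulVec_apply,
      Pi.one_apply, of_apply]
    split_ifs with h
    · rw [h, Finset.sum_erase_eq_sub (Finset.mem_univ _)]
      ring
    · ring
  have hroot : (∑ i, θ i) - 1 ⬝ᵥ (fun j : Fin n => θ j.succ) = θ 0 := by
    rw [one_dotProduct, Fin.sum_univ_succ]
    ring
  rw [hfactor, det_mul, det_diagonal, det_scalar_sub_vecMulVec, hroot, Fintype.card_fin,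
    Fin.prod_univ_succ]
  ring
end

section
/- Let T be a phylogenetic tree (a finite tree in which every internal vertex has degree at least 3) with at least one edge, and let θ̂ : E(T) → ℂ be such that every coordinate of p := φ_T(θ̂) is nonzero. Then the fiber of p under the path map is exactly { ε^S ∗ θ̂ : S ⊆ Int(T) }; that is, for θ : E(T) → ℂ one has φ_T(θ) = φ_T(θ̂) if and only if there exists a subset S of Int(T) with θ = ε^S ∗ θ̂. -/
open SimpleGraph Finset

section TreeSetup

variable {V : Type*} [Fintype V] [DecidableEq V]

set_option linter.unusedSectionVars false

/-- The unique path between two vertices of a tree. -/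
noncomputable def treePath (G : SimpleGraph V) (hG : G.IsTree) (u v : V) : G.Walk u v :=
  (hG.existsUnique_path u v).choose

/-- The leaves of a graph: vertices of degree 1. -/
def leafFinset (G : SimpleGraph V) [DecidableRel G.Adj] : Finset V :=
  Finset.univ.filter fun v => G.degree v = 1

/-- The internal vertices of a graph: vertices of degree at least 2. -/
def internalFinset (G : SimpleGraph V) [DecidableRel G.Adj] : Finset V :=
  Finset.univ.filter fun v => 2 ≤ G.degree v

/-- Given an assignment `θ : E(T) → ℂ` of parameters to the edges of a tree,
`pathProd G hG θ u v = ∏_{e ∈ u↝v} θ(e)` is the product of the parameters of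
the edges on the unique path joining `u` and `v`. -/
noncomputable def pathProd (G : SimpleGraph V) (hG : G.IsTree)
    (θ : G.edgeSet → ℂ) (u v : V) : ℂ :=
  ((treePath G hG u v).edges.attach.map
    (fun e => θ ⟨e.1, (treePath G hG u v).edges_subset_edgeSet e.2⟩)).prod

/-- The sign vector `ε^S` attached to a set `S` of (internal) vertices:
`ε^S_e = (−1)^{#(S ∩ e)}`, where the edge `e` is identified with its
two-element set of endpoints. -/
def epsSign (S : Finset V) (e : Sym2 V) : ℂ :=
  Sym2.lift ⟨fun a b =>
      (-1 : ℂ) ^ ((if a ∈ S then 1 else 0) + (if b ∈ S then 1 else 0) : ℕ),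
    fun a b => by dsimp only; rw [add_comm]⟩ e

end TreeSetup

section AuxLemmas
set_option linter.unusedSectionVars false

open SimpleGraph Walk

variable {V : Type*} [Fintype V] [DecidableEq V] {G : SimpleGraph V}

lemma tp_isPath (hG : G.IsTree) (u v : V) : (treePath G hG u v).IsPath :=
  (hG.existsUnique_path u v).choose_spec.1

lemma path_eq (hG : G.IsTree) {u v : V} {p q : G.Walk u v}
    (hp : p.IsPath) (hq : q.IsPath) : p = q :=
  (hG.existsUnique_path u v).unique hp hq

lemma eq_tp (hG : G.IsTree) {u v : V} {p : G.Walk u v} (hp : p.IsPath) :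
    p = treePath G hG u v := path_eq hG hp (tp_isPath hG u v)

lemma pathProd_eq (hG : G.IsTree) (θ : G.edgeSet → ℂ) (f : Sym2 V → ℂ)
    (hf : ∀ (e : Sym2 V) (he : e ∈ G.edgeSet), f e = θ ⟨e, he⟩) (u v : V) :
    pathProd G hG θ u v = ((treePath G hG u v).edges.map f).prod := by
  unfold pathProd
  congr 1
  have h1 : ∀ x ∈ (treePath G hG u v).edges.attach,
      θ ⟨x.1, (treePath G hG u v).edges_subset_edgeSet x.2⟩ = f x.1 := by
    intro x _
    exact (hf x.1 _).symm
  rw [List.map_congr_left h1, List.attach_map_val]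

lemma list_prod_map_mul (f g : Sym2 V → ℂ) (l : List (Sym2 V)) :
    (l.map (fun e => f e * g e)).prod = (l.map f).prod * (l.map g).prod := by
  induction l with
  | nil => simp
  | cons a l ih => simp only [List.map_cons, List.prod_cons, ih]; ring

lemma list_prod_map_div (f g : Sym2 V → ℂ) (l : List (Sym2 V)) :
    (l.map (fun e => f e / g e)).prod = (l.map f).prod / (l.map g).prod := by
  induction l with
  | nil => simp
  | cons a l ih => simp only [List.map_cons, List.prod_cons, ih]
                   rw [div_mul_div_comm]

lemma eps_prod (S : Finset V) {i j : V} (w : G.Walk i j) :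
    (w.edges.map (epsSign S)).prod
      = (-1 : ℂ) ^ ((if i ∈ S then 1 else 0) + (if j ∈ S then 1 else 0) : ℕ) := by
  induction w with
  | @nil u => by_cases h : u ∈ S <;> simp [h]
  | @cons u x j h p ih =>
    rw [Walk.edges_cons, List.map_cons, List.prod_cons, ih]
    have he : epsSign S s(u, x)
        = (-1 : ℂ) ^ ((if u ∈ S then 1 else 0) + (if x ∈ S then 1 else 0) : ℕ) := rfl
    rw [he]
    by_cases hu : u ∈ S <;> by_cases hx : x ∈ S <;> by_cases hj : j ∈ S <;>
      simp [hu, hx, hj]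

lemma append_isPath {u v w : V} {p : G.Walk u v} {q : G.Walk v w}
    (hp : p.IsPath) (hq : q.IsPath)
    (hd : ∀ x, x ∈ p.support → x ∈ q.support → x = v) :
    (p.append q).IsPath := by
  rw [Walk.isPath_def, Walk.support_append]
  have hq' := (Walk.isPath_def _).1 hq
  have hcons : q.support = v :: q.support.tail := q.support_eq_cons
  rw [hcons] at hq'
  rcases List.nodup_cons.1 hq' with ⟨hvt, htl⟩
  refine List.Nodup.append ((Walk.isPath_def _).1 hp) htl ?_
  intro x hxp hxt
  have hxq : x ∈ q.support := by rw [hcons]; exact List.mem_cons_of_mem _ hxt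
  have hxv := hd x hxp hxq
  subst hxv
  exact hvt hxt

lemma disj_dir (hG : G.IsTree) {v a b x y : V} (h₁ : G.Adj v a) (h₂ : G.Adj v b)
    (hab : a ≠ b) {p : G.Walk a x} {q : G.Walk b y}
    (hp : (Walk.cons h₁ p).IsPath) (hq : (Walk.cons h₂ q).IsPath) :
    ∀ z, z ∈ p.support → z ∈ q.support → False := by
  intro z hzp hzq
  rcases (Walk.cons_isPath_iff h₁ p).1 hp with ⟨hp', hvp⟩
  rcases (Walk.cons_isPath_iff h₂ q).1 hq with ⟨hq', hvq⟩
  have P1 : (Walk.cons h₁ (p.takeUntil z hzp)).IsPath := by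
    rw [Walk.cons_isPath_iff]
    exact ⟨hp'.takeUntil hzp, fun hv => hvp (p.support_takeUntil_subset hzp hv)⟩
  have P2 : (Walk.cons h₂ (q.takeUntil z hzq)).IsPath := by
    rw [Walk.cons_isPath_iff]
    exact ⟨hq'.takeUntil hzq, fun hv => hvq (q.support_takeUntil_subset hzq hv)⟩
  have heq := path_eq hG P1 P2
  have h := congrArg (fun w => Walk.getVert w 1) heq
  simp only [Walk.getVert_cons_succ, Walk.getVert_zero] at h
  exact hab h


lemma extend_to_leaf (hG : G.IsTree) [DecidableRel G.Adj] {v a : V} (hne : v ≠ a) :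
    ∃ (i : V) (w : G.Walk v i), w.IsPath ∧ G.degree i = 1 ∧ a ∈ w.support := by
  suffices H : ∀ n (v a : V), v ≠ a → Fintype.card V ≤ n + (treePath G hG v a).length →
      ∃ (i : V) (w : G.Walk v i), w.IsPath ∧ G.degree i = 1 ∧ a ∈ w.support by
    exact H (Fintype.card V) v a hne (Nat.le_add_right _ _)
  intro n
  induction n with
  | zero =>
    intro v a hva hlen
    exact absurd hlen (by simpa using (tp_isPath hG v a).length_lt)
  | succ n ih =>
    intro v a hva hlen
    -- decompose the reversed path to find the neighbor of `a` on the path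
    obtain ⟨w', h', pr, hpr⟩ :=
      Walk.exists_eq_cons_of_ne (Ne.symm hva) (treePath G hG v a).reverse
    have hrevP : (Walk.cons h' pr).IsPath := hpr ▸ (tp_isPath hG v a).reverse
    rcases (Walk.cons_isPath_iff h' pr).1 hrevP with ⟨hprP, hapr⟩
    by_cases hdeg : 2 ≤ G.degree a
    · -- pick a neighbor c of a different from w'
      have hcard : 1 < (G.neighborFinset a).card := by
        rw [G.card_neighborFinset_eq_degree]; omega
      obtain ⟨c, hcN, hcw⟩ := Finset.exists_mem_ne hcard w'
      have hadj : G.Adj a c := (G.mem_neighborFinset a c).1 hcN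
      have hca : c ≠ a := fun h => G.ne_of_adj hadj h.symm
      -- c is not on the path from v to a
      have hcp : c ∉ (treePath G hG v a).support := by
        intro hc
        have hc' : c ∈ pr.support := by
          have : c ∈ (treePath G hG v a).reverse.support := by
            rw [Walk.support_reverse]; exact List.mem_reverse.2 hc
          rw [hpr, Walk.support_cons] at this
          rcases List.mem_cons.1 this with h | h
          · exact absurd h hca
          · exact h
        have P1 : (Walk.cons h' (pr.takeUntil c hc')).IsPath := by
          rw [Walk.cons_isPath_iff]
          exact ⟨hprP.takeUntil hc', fun hmem => hapr (pr.support_takeUntil_subset hc' hmem)⟩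
        have P2 : (Walk.cons hadj Walk.nil).IsPath := by
          rw [Walk.cons_isPath_iff]
          refine ⟨Walk.IsPath.nil, ?_⟩
          rw [Walk.support_nil]
          simp [Ne.symm hca]
        have heq := path_eq hG P1 P2
        have hgv := congrArg (fun w => Walk.getVert w 1) heq
        simp only [Walk.getVert_cons_succ, Walk.getVert_zero] at hgv
        exact hcw hgv.symm
      -- extend the path by the edge a-c
      have hconsP : ((treePath G hG v a).concat hadj).IsPath := by
        rw [Walk.concat_eq_append]
        apply append_isPath (tp_isPath hG v a)
        · rw [Walk.cons_isPath_iff]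
          refine ⟨Walk.IsPath.nil, ?_⟩
          rw [Walk.support_nil]
          simp [G.ne_of_adj hadj]
        · intro x hx1 hx2
          rw [Walk.support_cons, Walk.support_nil] at hx2
          rcases List.mem_cons.1 hx2 with h | h
          · exact h
          · simp only [List.mem_singleton] at h
            subst h
            exact absurd hx1 hcp
      have hvc : v ≠ c := by
        intro h; subst h; exact hcp (treePath G hG v a).start_mem_support
      have heqc : (treePath G hG v a).concat hadj = treePath G hG v c := eq_tp hG hconsP
      have hlenc : (treePath G hG v c).length = (treePath G hG v a).length + 1 := by
        rw [← heqc, Walk.length_concat]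
      obtain ⟨i, w, hwP, hdi, hcw'⟩ := ih v c hvc (by omega)
      refine ⟨i, w, hwP, hdi, ?_⟩
      -- a lies on the path v↝c which is an initial segment of w
      have hcmem : c ∈ w.support := hcw'
      have htu : w.takeUntil c hcmem = treePath G hG v c :=
        eq_tp hG (hwP.takeUntil hcmem)
      have hamem : a ∈ (w.takeUntil c hcmem).support := by
        rw [htu, ← heqc, Walk.concat_eq_append]
        rw [Walk.mem_support_append_iff]
        exact Or.inl (treePath G hG v a).end_mem_support
      exact w.support_takeUntil_subset hcmem hamem
    · -- a has degree 1 : it is a leaf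
      have hpos : 0 < G.degree a := by
        rw [G.degree_pos_iff_exists_adj]
        exact ⟨w', h'⟩
      exact ⟨a, treePath G hG v a, tp_isPath hG v a, by omega,
        (treePath G hG v a).end_mem_support⟩

lemma leaf_dir (hG : G.IsTree) [DecidableRel G.Adj] {v a : V} (h : G.Adj v a) :
    ∃ (i : V) (w : G.Walk a i), w.IsPath ∧ v ∉ w.support ∧ G.degree i = 1 ∧
      Walk.cons h w = treePath G hG v i := by
  obtain ⟨i, w0, hw0P, hdi, haw0⟩ := extend_to_leaf hG (G.ne_of_adj h)
  have htake : w0.takeUntil a haw0 = Walk.cons h Walk.nil := by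
    apply path_eq hG (hw0P.takeUntil haw0)
    rw [Walk.cons_isPath_iff]
    refine ⟨Walk.IsPath.nil, ?_⟩
    rw [Walk.support_nil]
    simp [G.ne_of_adj h]
  have hspec := w0.take_spec haw0
  rw [htake] at hspec
  -- hspec : (cons h nil).append (w0.dropUntil a haw0) = w0
  rw [Walk.cons_append, Walk.nil_append] at hspec
  have hw0P' : (Walk.cons h (w0.dropUntil a haw0)).IsPath := by rw [hspec]; exact hw0P
  rcases (Walk.cons_isPath_iff h (w0.dropUntil a haw0)).1 hw0P' with ⟨hdP, hvd⟩
  exact ⟨i, w0.dropUntil a haw0, hdP, hvd, hdi, hspec.trans (eq_tp hG hw0P)⟩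

lemma degree_pos (hG : G.IsTree) [DecidableRel G.Adj] (hedge : G.edgeFinset.Nonempty)
    (x : V) : 0 < G.degree x := by
  rw [G.degree_pos_iff_exists_adj]
  obtain ⟨e, he⟩ := hedge
  rw [SimpleGraph.mem_edgeFinset] at he
  induction e using Sym2.ind with
  | _ u v =>
    rw [SimpleGraph.mem_edgeSet] at he
    rcases eq_or_ne x u with rfl | hxu
    · exact ⟨v, he⟩
    · obtain ⟨W⟩ := hG.isConnected.preconnected x u
      cases W with
      | nil => exact absurd rfl hxu
      | cons h _ => exact ⟨_, h⟩

lemma exists_leaf (hG : G.IsTree) [DecidableRel G.Adj] (hedge : G.edgeFinset.Nonempty) :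
    ∃ r : V, G.degree r = 1 := by
  by_contra hc
  push_neg at hc
  have h2 : ∀ v : V, 2 ≤ G.degree v := by
    intro v
    have := degree_pos hG hedge v
    have := hc v
    omega
  have hsum := G.sum_degrees_eq_twice_card_edges
  have hcard := hG.card_edgeFinset
  have hle : Fintype.card V * 2 ≤ ∑ v, G.degree v := by
    have := Finset.card_nsmul_le_sum Finset.univ (fun v => G.degree v) 2
      (fun v _ => h2 v)
    simpa [smul_eq_mul, Finset.card_univ, mul_comm] using this
  omega

end AuxLemmas

/-- **Theorem 8 (fibers of the path map).**
Let `T = G` be a phylogenetic tree (every internal vertex has degree at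
least 3) with at least one edge, and let `θ̂ : E(T) → ℂ` be such that every
coordinate `p_{ij} = ∏_{e ∈ i↝j} θ̂(e)` (for distinct leaves `i, j`) of
`p = φ_T(θ̂)` is nonzero.  Then for `θ : E(T) → ℂ` one has `φ_T(θ) = φ_T(θ̂)`
if and only if `θ = ε^S ∗ θ̂` for some subset `S ⊆ Int(T)`. -/
theorem fiber_of_path_map
    {V : Type*} [Fintype V] [DecidableEq V]
    (G : SimpleGraph V) [DecidableRel G.Adj] (hG : G.IsTree)
    (hphylo : ∀ v : V, 2 ≤ G.degree v → 3 ≤ G.degree v)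
    (hedge : G.edgeFinset.Nonempty)
    (θhat : G.edgeSet → ℂ)
    (hp : ∀ i j : V, i ∈ leafFinset G → j ∈ leafFinset G → i ≠ j →
      pathProd G hG θhat i j ≠ 0)
    (θ : G.edgeSet → ℂ) :
    (∀ i j : V, i ∈ leafFinset G → j ∈ leafFinset G → i ≠ j →
        pathProd G hG θ i j = pathProd G hG θhat i j)
      ↔ ∃ S : Finset V, S ⊆ internalFinset G ∧
          θ = fun e => epsSign S e.1 * θhat e := by
  classical
  have hleafmem : ∀ x : V, G.degree x = 1 → x ∈ leafFinset G := fun x hx =>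
    Finset.mem_filter.2 ⟨Finset.mem_univ _, hx⟩
  have hleafdeg : ∀ x : V, x ∈ leafFinset G → G.degree x = 1 := fun x hx =>
    (Finset.mem_filter.1 hx).2
  set Tf : Sym2 V → ℂ := fun e => if he : e ∈ G.edgeSet then θ ⟨e, he⟩ else 1 with hTf
  set Th : Sym2 V → ℂ := fun e => if he : e ∈ G.edgeSet then θhat ⟨e, he⟩ else 1 with hTh
  have hTf' : ∀ (e : Sym2 V) (he : e ∈ G.edgeSet), Tf e = θ ⟨e, he⟩ := by
    intro e he; rw [hTf]; exact dif_pos he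
  have hTh' : ∀ (e : Sym2 V) (he : e ∈ G.edgeSet), Th e = θhat ⟨e, he⟩ := by
    intro e he; rw [hTh]; exact dif_pos he
  constructor
  · -- forward direction
    intro hEq
    set ρ : Sym2 V → ℂ := fun e => Tf e / Th e with hρ
    -- θhat is nonzero on every edge
    have hne : ∀ (e : Sym2 V), e ∈ G.edgeSet → Th e ≠ 0 := by
      intro e he
      induction e using Sym2.ind with
      | _ u v =>
        have hadj : G.Adj u v := he
        obtain ⟨j, wj, hwjP, hunotwj, hdegj, hconsj⟩ := leaf_dir hG hadj
        obtain ⟨i, wi, hwiP, hvnotwi, hdegi, hconsi⟩ := leaf_dir hG hadj.symm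
        have hdisj2 : ∀ z, z ∈ wi.support → z ∈ wj.support → False := by
          intro z hzi hzj
          have P1 : (Walk.cons hadj.symm (wi.takeUntil z hzi)).IsPath := by
            rw [Walk.cons_isPath_iff]
            exact ⟨hwiP.takeUntil hzi,
              fun hv => hvnotwi (wi.support_takeUntil_subset hzi hv)⟩
          have P2 : (wj.takeUntil z hzj).IsPath := hwjP.takeUntil hzj
          have hE : Walk.cons hadj.symm (wi.takeUntil z hzi) = wj.takeUntil z hzj :=
            path_eq hG P1 P2
          have hu1 : u ∈ (wj.takeUntil z hzj).support := by
            rw [← hE, Walk.support_cons]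
            exact List.mem_cons_of_mem _ (wi.takeUntil z hzi).start_mem_support
          exact hunotwj (wj.support_takeUntil_subset hzj hu1)
        have hij : i ≠ j := by
          intro hh
          exact hdisj2 i wi.end_mem_support (by rw [hh]; exact wj.end_mem_support)
        have hPvi : (Walk.cons hadj.symm wi).IsPath := by
          rw [Walk.cons_isPath_iff]; exact ⟨hwiP, hvnotwi⟩
        have hW : ((Walk.cons hadj.symm wi).reverse.append wj).IsPath := by
          apply append_isPath hPvi.reverse hwjP
          intro z hz1 hz2
          rw [Walk.support_reverse, List.mem_reverse, Walk.support_cons] at hz1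
          rcases List.mem_cons.1 hz1 with rfl | hz1
          · rfl
          · exact (hdisj2 z hz1 hz2).elim
        have hWe : (Walk.cons hadj.symm wi).reverse.append wj = treePath G hG i j :=
          eq_tp hG hW
        have hmem : s(u, v) ∈ (treePath G hG i j).edges := by
          rw [← hWe, Walk.edges_append, Walk.edges_reverse, Walk.edges_cons]
          apply List.mem_append_left
          rw [List.mem_reverse]
          have : s(u, v) = s(v, u) := Sym2.eq_swap
          rw [this]
          exact List.mem_cons_self
        have hpne := hp i j (hleafmem i hdegi) (hleafmem j hdegj) hij
        rw [pathProd_eq hG θhat Th hTh' i j] at hpne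
        intro h0
        exact hpne (List.prod_eq_zero (List.mem_map.2 ⟨s(u, v), hmem, h0⟩))
    -- ρ-products over leaf-to-leaf paths are 1
    have claim0 : ∀ i j : V, G.degree i = 1 → G.degree j = 1 → i ≠ j →
        ((treePath G hG i j).edges.map ρ).prod = 1 := by
      intro i j hi hj hij
      rw [hρ, list_prod_map_div, ← pathProd_eq hG θ Tf hTf', ← pathProd_eq hG θhat Th hTh']
      rw [hEq i j (hleafmem i hi) (hleafmem j hj) hij]
      exact div_self (hp i j (hleafmem i hi) (hleafmem j hj) hij)
    obtain ⟨r, hr⟩ := exists_leaf hG hedge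
    set s : V → ℂ := fun x => ((treePath G hG r x).edges.map ρ).prod with hs
    have claim1 : ∀ x, G.degree x = 1 → s x = 1 := by
      intro x hx
      rcases eq_or_ne r x with rfl | hrx
      · have hnil : treePath G hG r r = Walk.nil := (eq_tp hG Walk.IsPath.nil).symm
        rw [hs]; simp [hnil]
      · exact claim0 r x hr hx hrx
    have claim2 : ∀ x, s x * s x = 1 := by
      intro x
      by_cases hd : 2 ≤ G.degree x
      · have hd3 := hphylo x hd
        have hxr : x ≠ r := by intro h; rw [h, hr] at hd; omega
        obtain ⟨w', h₀, w₀, hw0⟩ :=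
          Walk.exists_eq_cons_of_ne hxr (treePath G hG x r)
        have hxrP : (Walk.cons h₀ w₀).IsPath := hw0 ▸ tp_isPath hG x r
        have hcard : 1 < (G.neighborFinset x \ {w'}).card := by
          have h1 : (G.neighborFinset x).card = G.degree x := rfl
          have h2 := Finset.le_card_sdiff ({w'} : Finset V) (G.neighborFinset x)
          have h3 : ({w'} : Finset V).card = 1 := Finset.card_singleton _
          omega
        obtain ⟨a, ha, b, hb, hab⟩ := Finset.one_lt_card.1 hcard
        rcases Finset.mem_sdiff.1 ha with ⟨haN, haw⟩
        rcases Finset.mem_sdiff.1 hb with ⟨hbN, hbw⟩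
        have hadja : G.Adj x a := (G.mem_neighborFinset x a).1 haN
        have hadjb : G.Adj x b := (G.mem_neighborFinset x b).1 hbN
        have haw' : a ≠ w' := by simpa using haw
        have hbw' : b ≠ w' := by simpa using hbw
        obtain ⟨i, wi, hwiP, hxwi, hdi, hci⟩ := leaf_dir hG hadja
        obtain ⟨j, wj, hwjP, hxwj, hdj, hcj⟩ := leaf_dir hG hadjb
        have hPi : (Walk.cons hadja wi).IsPath := by
          rw [Walk.cons_isPath_iff]; exact ⟨hwiP, hxwi⟩
        have hPj : (Walk.cons hadjb wj).IsPath := by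
          rw [Walk.cons_isPath_iff]; exact ⟨hwjP, hxwj⟩
        have dij := disj_dir hG hadja hadjb hab hPi hPj
        have dir := disj_dir hG hadja h₀ haw' hPi hxrP
        have djr := disj_dir hG hadjb h₀ hbw' hPj hxrP
        have hrev : (Walk.cons h₀ w₀).reverse = treePath G hG r x := eq_tp hG hxrP.reverse
        have hA1 : ((treePath G hG r x).append (Walk.cons hadja wi)).IsPath := by
          apply append_isPath (tp_isPath hG r x) hPi
          intro z hz1 hz2
          rw [← hrev, Walk.support_reverse, List.mem_reverse, Walk.support_cons] at hz1
          rw [Walk.support_cons] at hz2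
          rcases List.mem_cons.1 hz2 with rfl | hz2
          · rfl
          rcases List.mem_cons.1 hz1 with rfl | hz1
          · rfl
          · exact (dir z hz2 hz1).elim
        have hA2 : ((treePath G hG r x).append (Walk.cons hadjb wj)).IsPath := by
          apply append_isPath (tp_isPath hG r x) hPj
          intro z hz1 hz2
          rw [← hrev, Walk.support_reverse, List.mem_reverse, Walk.support_cons] at hz1
          rw [Walk.support_cons] at hz2
          rcases List.mem_cons.1 hz2 with rfl | hz2
          · rfl
          rcases List.mem_cons.1 hz1 with rfl | hz1
          · rfl
          · exact (djr z hz2 hz1).elim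
        have hA3 : ((Walk.cons hadja wi).reverse.append (Walk.cons hadjb wj)).IsPath := by
          apply append_isPath hPi.reverse hPj
          intro z hz1 hz2
          rw [Walk.support_reverse, List.mem_reverse, Walk.support_cons] at hz1
          rcases List.mem_cons.1 hz1 with rfl | hz1
          · rfl
          rw [Walk.support_cons] at hz2
          rcases List.mem_cons.1 hz2 with rfl | hz2
          · rfl
          · exact (dij z hz1 hz2).elim
        have eA1 : treePath G hG r i = (treePath G hG r x).append (Walk.cons hadja wi) :=
          (eq_tp hG hA1).symm
        have eA2 : treePath G hG r j = (treePath G hG r x).append (Walk.cons hadjb wj) :=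
          (eq_tp hG hA2).symm
        have eA3 : treePath G hG i j
            = (Walk.cons hadja wi).reverse.append (Walk.cons hadjb wj) :=
          (eq_tp hG hA3).symm
        -- distinctness of the three leaves
        have hir : i ≠ r := by
          intro hh
          exact dir i wi.end_mem_support (by rw [hh]; exact w₀.end_mem_support)
        have hjr : j ≠ r := by
          intro hh
          exact djr j wj.end_mem_support (by rw [hh]; exact w₀.end_mem_support)
        have hij : i ≠ j := by
          intro hh
          exact dij i wi.end_mem_support (by rw [hh]; exact wj.end_mem_support)
        -- the three products
        set A : ℂ := ((Walk.cons hadja wi).edges.map ρ).prod with hA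
        set B : ℂ := ((Walk.cons hadjb wj).edges.map ρ).prod with hB
        have e1 : s x * A = 1 := by
          have := claim0 r i hr hdi (Ne.symm hir)
          rw [eA1, Walk.edges_append, List.map_append, List.prod_append] at this
          exact this
        have e2 : s x * B = 1 := by
          have := claim0 r j hr hdj (Ne.symm hjr)
          rw [eA2, Walk.edges_append, List.map_append, List.prod_append] at this
          exact this
        have e3 : A * B = 1 := by
          have := claim0 i j hdi hdj hij
          rw [eA3, Walk.edges_append, List.map_append, List.prod_append,
            Walk.edges_reverse, List.map_reverse, List.prod_reverse] at this
          exact this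
        have key : (s x * A) * (s x * B) = (s x * s x) * (A * B) := by ring
        rw [e1, e2, e3, mul_one] at key
        simpa using key.symm
      · have hpos := degree_pos hG hedge x
        have hx1 : G.degree x = 1 := by omega
        rw [claim1 x hx1, mul_one]
    have claim3 : ∀ u v : V, G.Adj u v → ρ s(u, v) = s u * s v := by
      intro u v h
      by_cases hu : u ∈ (treePath G hG r v).support
      · have hdrop : (treePath G hG r v).dropUntil u hu = Walk.cons h Walk.nil := by
          apply path_eq hG ((tp_isPath hG r v).dropUntil hu)
          rw [Walk.cons_isPath_iff]
          refine ⟨Walk.IsPath.nil, ?_⟩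
          rw [Walk.support_nil]
          simp [G.ne_of_adj h]
        have htake : (treePath G hG r v).takeUntil u hu = treePath G hG r u :=
          eq_tp hG ((tp_isPath hG r v).takeUntil hu)
        have hspec := (treePath G hG r v).take_spec hu
        rw [hdrop, htake] at hspec
        have hsv : s v = s u * ρ s(u, v) := by
          rw [hs]
          dsimp only
          rw [← hspec, Walk.edges_append, List.map_append, List.prod_append,
            Walk.edges_cons, Walk.edges_nil]
          simp
        rw [hsv]
        have h2 := claim2 u
        calc ρ s(u, v) = (s u * s u) * ρ s(u, v) := by rw [h2, one_mul]
          _ = s u * (s u * ρ s(u, v)) := by ring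
      · have hconsP : ((treePath G hG r v).concat h.symm).IsPath := by
          rw [Walk.concat_eq_append]
          apply append_isPath (tp_isPath hG r v)
          · rw [Walk.cons_isPath_iff]
            refine ⟨Walk.IsPath.nil, ?_⟩
            rw [Walk.support_nil]
            simp [G.ne_of_adj h.symm]
          · intro z hz1 hz2
            rw [Walk.support_cons, Walk.support_nil] at hz2
            rcases List.mem_cons.1 hz2 with rfl | hz2
            · rfl
            · simp only [List.mem_singleton] at hz2
              subst hz2
              exact absurd hz1 hu
        have heq2 : (treePath G hG r v).concat h.symm = treePath G hG r u :=
          eq_tp hG hconsP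
        have hsu : s u = s v * ρ s(u, v) := by
          rw [hs]
          dsimp only
          rw [← heq2, Walk.concat_eq_append, Walk.edges_append, List.map_append,
            List.prod_append, Walk.edges_cons, Walk.edges_nil]
          have hsw : s(v, u) = s(u, v) := Sym2.eq_swap
          rw [hsw]
          simp
        rw [hsu]
        have h2 := claim2 v
        calc ρ s(u, v) = (s v * s v) * ρ s(u, v) := by rw [h2, one_mul]
          _ = (s v * ρ s(u, v)) * s v := by ring
    -- define the sign set S
    set S : Finset V := Finset.univ.filter (fun x => 2 ≤ G.degree x ∧ s x = -1) with hS
    have hSsub : S ⊆ internalFinset G := by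
      intro x hx
      rw [hS, Finset.mem_filter] at hx
      exact Finset.mem_filter.2 ⟨Finset.mem_univ _, hx.2.1⟩
    have hsign : ∀ x : V, ((-1 : ℂ) ^ (if x ∈ S then 1 else 0 : ℕ)) = s x := by
      intro x
      by_cases hx : x ∈ S
      · rw [if_pos hx, pow_one]
        rw [hS, Finset.mem_filter] at hx
        exact hx.2.2.symm
      · rw [if_neg hx, pow_zero]
        rcases mul_self_eq_one_iff.1 (claim2 x) with h1 | h1
        · exact h1.symm
        · exfalso
          rw [hS, Finset.mem_filter] at hx
          push_neg at hx
          have hdx : ¬ (2 ≤ G.degree x) := by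
            intro hc
            exact (hx (Finset.mem_univ _) hc) h1
          have hpos := degree_pos hG hedge x
          have hx1 : G.degree x = 1 := by omega
          rw [claim1 x hx1] at h1
          norm_num at h1
    refine ⟨S, hSsub, ?_⟩
    funext e
    obtain ⟨e, he⟩ := e
    revert he
    induction e using Sym2.ind with
    | _ u v =>
      intro he
      have hadj : G.Adj u v := he
      have h3 := claim3 u v hadj
      rw [hρ] at h3
      dsimp only at h3
      rw [hTf' s(u, v) he, hTh' s(u, v) he] at h3
      have hne' : θhat ⟨s(u, v), he⟩ ≠ 0 := by
        have := hne s(u, v) he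
        rwa [hTh' s(u, v) he] at this
      have heps : epsSign S s(u, v) = s u * s v := by
        have h4 : epsSign S s(u, v)
            = (-1 : ℂ) ^ ((if u ∈ S then 1 else 0) + (if v ∈ S then 1 else 0) : ℕ) := rfl
        rw [h4, pow_add, hsign u, hsign v]
      show θ ⟨s(u, v), he⟩ = epsSign S s(u, v) * θhat ⟨s(u, v), he⟩
      rw [heps, ← h3]
      exact (div_mul_cancel₀ _ hne').symm
  · -- backward direction
    rintro ⟨S, hSsub, rfl⟩ i j hi hj hij
    have hf : ∀ (e : Sym2 V) (he : e ∈ G.edgeSet),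
        epsSign S e * Th e = epsSign S e * θhat ⟨e, he⟩ := by
      intro e he
      rw [hTh' e he]
    rw [pathProd_eq hG _ (fun e => epsSign S e * Th e) hf i j,
      pathProd_eq hG θhat Th hTh' i j]
    rw [list_prod_map_mul (epsSign S) Th]
    rw [eps_prod S (treePath G hG i j)]
    have hiS : i ∉ S := by
      intro hc
      have := Finset.mem_filter.1 (hSsub hc)
      have hdi := hleafdeg i hi
      omega
    have hjS : j ∉ S := by
      intro hc
      have := Finset.mem_filter.1 (hSsub hc)
      have hdj := hleafdeg j hj
      omega
    rw [if_neg hiS, if_neg hjS]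
    norm_num
end

section
/- Let T be a phylogenetic tree (a finite tree in which every internal vertex has degree at least 3) with at least one edge, and let θ̂ : E(T) → ℂ be such that every coordinate of p := φ_T(θ̂) is nonzero. Then the fiber { θ : E(T) → ℂ : φ_T(θ) = p } is a finite set of cardinality exactly 2^{#Int(T)}. -/
open SimpleGraph Finset

section AuxDev

open SimpleGraph Walk

set_option linter.unusedSectionVars false
set_option maxHeartbeats 1000000

variable {V : Type*} [Fintype V] [DecidableEq V]

/-- product of `f` over the edges of a walk -/
def wprod {G : SimpleGraph V} (f : Sym2 V → ℂ) {u v : V} (p : G.Walk u v) : ℂ :=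
  (p.edges.map f).prod

/-- extend a function on the edge set to all of `Sym2 V` by zero -/
def extE (G : SimpleGraph V) [DecidableRel G.Adj] (θ : G.edgeSet → ℂ) (e : Sym2 V) : ℂ :=
  if h : e ∈ G.edgeSet then θ ⟨e, h⟩ else 0

/-- the sign character of a vertex -/
def chi (S : Finset V) (x : V) : ℂ := if x ∈ S then -1 else 1

variable {G : SimpleGraph V}

@[simp] lemma wprod_nil (f : Sym2 V → ℂ) (v : V) : wprod f (Walk.nil : G.Walk v v) = 1 := rfl

@[simp] lemma wprod_cons (f : Sym2 V → ℂ) {u v w : V} (h : G.Adj u v) (p : G.Walk v w) :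
    wprod f (Walk.cons h p) = f s(u, v) * wprod f p := by
  simp [wprod, Walk.edges_cons]

lemma wprod_append (f : Sym2 V → ℂ) {u v w : V} (p : G.Walk u v) (q : G.Walk v w) :
    wprod f (p.append q) = wprod f p * wprod f q := by
  simp [wprod, Walk.edges_append]

lemma wprod_reverse (f : Sym2 V → ℂ) {u v : V} (p : G.Walk u v) :
    wprod f p.reverse = wprod f p := by
  simp [wprod, Walk.edges_reverse, List.map_reverse, List.prod_reverse]

lemma wprod_congr {f g : Sym2 V → ℂ} {u v : V} {p : G.Walk u v}
    (h : ∀ e ∈ p.edges, f e = g e) : wprod f p = wprod g p := by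
  unfold wprod; rw [List.map_congr_left h]

lemma wprod_mul (f g : Sym2 V → ℂ) {u v : V} (p : G.Walk u v) :
    wprod (fun e => f e * g e) p = wprod f p * wprod g p := by
  induction p with
  | nil => simp
  | cons h p ih => simp [ih]; ring

lemma wprod_ne_zero {f : Sym2 V → ℂ} {u v : V} {p : G.Walk u v}
    (h : ∀ e ∈ p.edges, f e ≠ 0) : wprod f p ≠ 0 := by
  unfold wprod
  rw [Ne, List.prod_eq_zero_iff]
  intro hx
  obtain ⟨e, he, hx0⟩ := List.mem_map.mp hx
  exact h e he hx0

lemma wprod_eq_zero_of_mem {f : Sym2 V → ℂ} {u v : V} {p : G.Walk u v} {e : Sym2 V}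
    (he : e ∈ p.edges) (hf : f e = 0) : wprod f p = 0 := by
  unfold wprod
  exact List.prod_eq_zero (hf ▸ List.mem_map_of_mem (f := f) he)

lemma chi_mul_self (S : Finset V) (x : V) : chi S x * chi S x = 1 := by
  unfold chi; split <;> norm_num

lemma epsSign_mk (S : Finset V) (a b : V) : epsSign S s(a, b) = chi S a * chi S b := by
  show (-1 : ℂ) ^ ((if a ∈ S then 1 else 0) + (if b ∈ S then 1 else 0) : ℕ) = _
  rw [pow_add]
  unfold chi
  split <;> split <;> norm_num

lemma wprod_epsSign (S : Finset V) {u v : V} (p : G.Walk u v) :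
    wprod (epsSign S) p = chi S u * chi S v := by
  induction p with
  | nil => rw [wprod]; simp [chi_mul_self]
  | cons h p ih =>
      rename_i a b c
      rw [wprod] at *
      simp only [Walk.edges_cons, List.map_cons, List.prod_cons]
      rw [ih, epsSign_mk]
      have := chi_mul_self S b
      ring_nf
      rw [pow_two, this]; ring

lemma exists_adj_mem_of_ne {a v : V} (w : G.Walk a v) (h : a ≠ v) :
    ∃ c, G.Adj a c ∧ c ∈ w.support := by
  cases w with
  | nil => exact absurd rfl h
  | cons h' p => exact ⟨_, h', by simp⟩

variable (G : SimpleGraph V) [DecidableRel G.Adj] (hG : G.IsTree)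

local notation "tp" => treePath G hG

lemma tp_isPath_s4 (u v : V) : (tp u v).IsPath :=
  (hG.existsUnique_path u v).choose_spec.1

lemma tp_unique {u v : V} (p : G.Walk u v) (hp : p.IsPath) : tp u v = p :=
  (hG.existsUnique_path u v).unique (tp_isPath_s4 G hG u v) hp

lemma tp_nil (v : V) : tp v v = Walk.nil := tp_unique G hG _ IsPath.nil

lemma tp_takeUntil {u v x : V} (h : x ∈ (tp u v).support) :
    tp u x = (tp u v).takeUntil x h :=
  tp_unique G hG _ ((tp_isPath_s4 G hG u v).takeUntil h)

lemma tp_dropUntil {u v x : V} (h : x ∈ (tp u v).support) :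
    tp x v = (tp u v).dropUntil x h :=
  tp_unique G hG _ ((tp_isPath_s4 G hG u v).dropUntil h)

lemma tp_split {u v x : V} (h : x ∈ (tp u v).support) :
    tp u v = (tp u x).append (tp x v) := by
  rw [tp_takeUntil G hG h, tp_dropUntil G hG h, Walk.take_spec]

lemma tp_reverse (u v : V) : tp u v = (tp v u).reverse :=
  tp_unique G hG _ (tp_isPath_s4 G hG v u).reverse

lemma wprod_tp_split (f : Sym2 V → ℂ) {u v x : V} (h : x ∈ (tp u v).support) :
    wprod f (tp u v) = wprod f (tp u x) * wprod f (tp x v) := by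
  rw [tp_split G hG h, wprod_append]

lemma wprod_tp_symm (f : Sym2 V → ℂ) (u v : V) :
    wprod f (tp u v) = wprod f (tp v u) := by
  rw [tp_reverse G hG u v, wprod_reverse]

lemma tp_cons {v u a : V} (h : G.Adj v u) (hv : v ∉ (tp u a).support) :
    tp v a = Walk.cons h (tp u a) :=
  tp_unique G hG _ ((tp_isPath_s4 G hG u a).cons hv)

/-- if `x` lies in the branch of `u` away from `v`, the path from `v` to `x` goes
through `u` -/
lemma tp_cons_mem {v u a x : V} (h : G.Adj v u) (hv : v ∉ (tp u a).support)
    (hx : x ∈ (tp u a).support) : tp v x = Walk.cons h (tp u x) := by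
  rw [tp_takeUntil G hG hx]
  exact tp_unique G hG _ (((tp_isPath_s4 G hG u a).takeUntil hx).cons
    (fun hmem => hv (Walk.support_takeUntil_subset _ hx hmem)))

/-- appending two paths meeting only at the midpoint gives a path -/
lemma isPath_append {a v b : V} {p : G.Walk a v} {q : G.Walk v b}
    (hp : p.IsPath) (hq : q.IsPath)
    (hmeet : ∀ x, x ∈ p.support → x ∈ q.support → x = v) :
    (p.append q).IsPath := by
  rw [Walk.isPath_def, Walk.support_append, List.nodup_append]
  refine ⟨hp.support_nodup, ?_, ?_⟩
  · have := hq.support_nodup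
    rw [Walk.support_eq_cons] at this
    exact this.of_cons
  · intro x hxp y hxq hxy; subst hxy
    have hxq' : x ∈ q.support := List.mem_of_mem_tail hxq
    have hxv : x = v := hmeet x hxp hxq'
    subst hxv
    have := hq.support_nodup
    rw [Walk.support_eq_cons] at this
    exact List.Nodup.notMem this hxq

include hG in
/-- in a tree, a neighbor of the endpoint of a path lying on the path determines
the last edge -/
lemma last_edge_eq {v a c : V} {Q : G.Walk v a} (hQ : Q.IsPath)
    (hca : G.Adj c a) (hc : c ∈ Q.support) :
    Q.edges.getLast? = some s(c, a) := by
  have hdrop : Q.dropUntil c hc = Walk.cons hca Walk.nil := by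
    rw [← tp_unique G hG _ (hQ.dropUntil hc)]
    exact tp_unique G hG _ (IsPath.nil.cons (by simp [hca.ne]))
  conv_lhs => rw [← Walk.take_spec Q hc]
  rw [Walk.edges_append, hdrop]
  simp [Walk.edges_cons, List.getLast?_append_cons]

/-- every branch at a vertex of a tree contains a leaf -/
lemma exists_leaf_branch {v u : V} (h : G.Adj v u) :
    ∃ a, G.degree a = 1 ∧ v ∉ (tp u a).support := by
  classical
  set B : Finset V := Finset.univ.filter (fun w => v ∉ (tp u w).support) with hB
  have hu : u ∈ B := by
    simp only [hB, Finset.mem_filter, Finset.mem_univ, true_and, tp_nil G hG u,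
      Walk.support_nil, List.mem_singleton]
    exact h.ne
  obtain ⟨a, haB, hmax⟩ := B.exists_max_image (fun w => (tp u w).length) ⟨u, hu⟩
  have hva : v ∉ (tp u a).support := by
    simpa only [hB, Finset.mem_filter, Finset.mem_univ, true_and] using haB
  refine ⟨a, ?_, hva⟩
  set Q : G.Walk v a := Walk.cons h (tp u a) with hQdef
  have hQ : Q.IsPath := (tp_isPath_s4 G hG u a).cons hva
  have hav : a ≠ v := fun e => hva (e ▸ (tp u a).end_mem_support)
  obtain ⟨b, hab, hbQ⟩ := exists_adj_mem_of_ne Q.reverse hav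
  rw [Walk.support_reverse, List.mem_reverse] at hbQ
  by_contra hdeg
  have hdeg2 : 1 < G.degree a := by
    have hpos : 0 < G.degree a := (SimpleGraph.degree_pos_iff_exists_adj G a).mpr ⟨b, hab⟩
    omega
  obtain ⟨c, hc, hcb⟩ := Finset.exists_mem_ne
    (by rwa [G.card_neighborFinset_eq_degree]) b
  rw [mem_neighborFinset] at hc
  have hcQ : c ∉ Q.support := by
    intro hcQ
    exact hcb (Sym2.congr_left.mp (Option.some_injective _
      ((last_edge_eq G hG hQ hc.symm hcQ).symm.trans
        (last_edge_eq G hG hQ hab.symm hbQ))))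
  have hcv : c ≠ v := fun e => hcQ (e ▸ Q.start_mem_support)
  have hctp : c ∉ (tp u a).support := fun hm => hcQ (by
    simp only [hQdef, Walk.support_cons, List.mem_cons]; exact Or.inr hm)
  have hP' : ((tp u a).concat hc).IsPath := by
    rw [← Walk.isPath_reverse_iff, Walk.reverse_concat]
    exact (tp_isPath_s4 G hG u a).reverse.cons (by
      rw [Walk.support_reverse, List.mem_reverse]; exact hctp) (h := hc.symm)
  have htpc : tp u c = (tp u a).concat hc := tp_unique G hG _ hP'
  have hcB : c ∈ B := by
    simp only [hB, Finset.mem_filter, Finset.mem_univ, true_and, htpc,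
      Walk.support_concat, List.concat_eq_append, List.mem_append, List.mem_singleton]
    rintro (hv | hv)
    · exact hva hv
    · exact hcv hv.symm
  have := hmax c hcB
  rw [htpc, Walk.length_concat] at this
  omega

/-- two branches through distinct neighbors meet only at the center -/
lemma branch_disjoint {v u₁ u₂ a b : V} (h₁ : G.Adj v u₁) (h₂ : G.Adj v u₂)
    (hne : u₁ ≠ u₂) (hv₁ : v ∉ (tp u₁ a).support) (hv₂ : v ∉ (tp u₂ b).support) :
    ∀ x, x ∈ (tp v a).support → x ∈ (tp v b).support → x = v := by
  intro x hxa hxb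
  by_contra hxv
  rw [tp_cons G hG h₁ hv₁, Walk.support_cons, List.mem_cons] at hxa
  rw [tp_cons G hG h₂ hv₂, Walk.support_cons, List.mem_cons] at hxb
  rcases hxa with rfl | hxa
  · exact hxv rfl
  rcases hxb with rfl | hxb
  · exact hxv rfl
  have e1 : tp v x = Walk.cons h₁ (tp u₁ x) := tp_cons_mem G hG h₁ hv₁ hxa
  have e2 : tp v x = Walk.cons h₂ (tp u₂ x) := tp_cons_mem G hG h₂ hv₂ hxb
  rw [e1] at e2
  have hsup := congrArg Walk.support e2
  rw [Walk.support_cons, Walk.support_cons] at hsup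
  have htail : (tp u₁ x).support = (tp u₂ x).support := by
    injection hsup
  rw [Walk.support_eq_cons (tp u₁ x), Walk.support_eq_cons (tp u₂ x)] at htail
  injection htail with h _
  exact hne h

/-- the path between leaves of two different branches passes through the center -/
lemma branch_path {v u₁ u₂ a b : V} (h₁ : G.Adj v u₁) (h₂ : G.Adj v u₂)
    (hne : u₁ ≠ u₂) (hv₁ : v ∉ (tp u₁ a).support) (hv₂ : v ∉ (tp u₂ b).support) :
    a ≠ b ∧ v ∈ (tp a b).support := by
  have hmeet := branch_disjoint G hG h₁ h₂ hne hv₁ hv₂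
  have hav : a ≠ v := by
    rintro rfl; exact hv₁ (tp u₁ a).end_mem_support
  have hP : ((tp v a).reverse.append (tp v b)).IsPath := by
    apply isPath_append G (tp_isPath_s4 G hG v a).reverse (tp_isPath_s4 G hG v b)
    intro x hx hx'
    rw [Walk.support_reverse, List.mem_reverse] at hx
    exact hmeet x hx hx'
  have htp : tp a b = (tp v a).reverse.append (tp v b) := tp_unique G hG _ hP
  constructor
  · rintro rfl
    exact hav (hmeet a (tp v a).end_mem_support (tp v a).end_mem_support)
  · rw [htp, Walk.mem_support_append_iff]
    left
    rw [Walk.support_reverse, List.mem_reverse]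
    exact (tp v a).start_mem_support

include hG in
/-- every vertex of a connected graph with an edge has positive degree -/
lemma degree_pos_s4 (hedge : G.edgeFinset.Nonempty) (w : V) : 0 < G.degree w := by
  obtain ⟨e, he⟩ := hedge
  rw [SimpleGraph.mem_edgeFinset] at he
  induction e with
  | _ x y =>
    rw [SimpleGraph.mem_edgeSet] at he
    rcases eq_or_ne w x with rfl | hwx
    · exact (SimpleGraph.degree_pos_iff_exists_adj G w).mpr ⟨y, he⟩
    · obtain ⟨W⟩ := hG.isConnected w x
      obtain ⟨c, hc, -⟩ := exists_adj_mem_of_ne W hwx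
      exact (SimpleGraph.degree_pos_iff_exists_adj G w).mpr ⟨c, hc⟩

/-- every edge lies on the path between two distinct leaves -/
lemma edge_on_leaf_path {u v : V} (huv : G.Adj u v) :
    ∃ a b, G.degree a = 1 ∧ G.degree b = 1 ∧ a ≠ b ∧ s(u, v) ∈ (tp a b).edges := by
  obtain ⟨a, ha1, hva⟩ := exists_leaf_branch G hG huv.symm
  obtain ⟨b, hb1, hub⟩ := exists_leaf_branch G hG huv
  have hmeet : ∀ x, x ∈ (tp u a).support → x ∈ (Walk.cons huv (tp v b)).support → x = u := by
    intro x hxa hxb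
    rw [Walk.support_cons, List.mem_cons] at hxb
    rcases hxb with rfl | hxb
    · rfl
    by_contra hxu
    have e1 : tp u x = (tp u a).takeUntil x hxa := tp_takeUntil G hG hxa
    have hvnot : v ∉ (tp u x).support := by
      rw [e1]
      exact fun hm => hva (Walk.support_takeUntil_subset _ hxa hm)
    have e2 : tp u x = Walk.cons huv (tp v x) := tp_cons_mem G hG huv hub hxb
    apply hvnot
    rw [e2, Walk.support_cons]
    exact List.mem_cons_of_mem _ (tp v x).start_mem_support
  have hQ : (Walk.cons huv (tp v b)).IsPath := (tp_isPath_s4 G hG v b).cons hub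
  have hP : ((tp u a).reverse.append (Walk.cons huv (tp v b))).IsPath := by
    apply isPath_append G (tp_isPath_s4 G hG u a).reverse hQ
    intro x hx hx'
    rw [Walk.support_reverse, List.mem_reverse] at hx
    exact hmeet x hx hx'
  have htp : tp a b = (tp u a).reverse.append (Walk.cons huv (tp v b)) :=
    tp_unique G hG _ hP
  refine ⟨a, b, ha1, hb1, ?_, ?_⟩
  · rintro rfl
    have hb2 : a ∈ (Walk.cons huv (tp v a)).support := by
      rw [Walk.support_cons]
      exact List.mem_cons_of_mem _ (tp v a).end_mem_support
    have := hmeet a (tp u a).end_mem_support hb2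
    subst this
    exact hub (tp v a).end_mem_support
  · rw [htp, Walk.edges_append, Walk.edges_cons, List.mem_append]
    exact Or.inr List.mem_cons_self

end AuxDev

section AuxDev2

open SimpleGraph Walk

set_option linter.unusedSectionVars false
set_option maxHeartbeats 1000000

variable {V : Type*} [Fintype V] [DecidableEq V]
variable (G : SimpleGraph V) [DecidableRel G.Adj] (hG : G.IsTree)

local notation "tp" => treePath G hG

lemma extE_apply (θ : G.edgeSet → ℂ) {e : Sym2 V} (h : e ∈ G.edgeSet) :
    extE G θ e = θ ⟨e, h⟩ := dif_pos h

lemma pathProd_eq_wprod (θ : G.edgeSet → ℂ) (u v : V) :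
    pathProd G hG θ u v = wprod (extE G θ) (tp u v) := by
  unfold pathProd wprod
  congr 1
  rw [← List.attach_map_val (l := (tp u v).edges) (f := extE G θ)]
  exact List.map_congr_left fun e _ => (extE_apply G θ _).symm

lemma tp_first_edge {v a : V} (h : v ≠ a) :
    ∃ (u' : V) (h' : G.Adj v u'),
      v ∉ (tp u' a).support ∧ tp v a = Walk.cons h' (tp u' a) := by
  have hW := tp_isPath_s4 G hG v a
  cases htp : tp v a with
  | nil => exact absurd rfl h
  | cons h' p =>
    rw [htp, Walk.cons_isPath_iff] at hW
    have hpeq := tp_unique G hG p hW.1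
    refine ⟨_, h', hpeq ▸ hW.2, ?_⟩
    rw [hpeq]

end AuxDev2

/-- **Theorem 8 (degree of the path parametrization).**
Let `T = G` be a phylogenetic tree (every internal vertex has degree at
least 3) with at least one edge, and let `θ̂ : E(T) → ℂ` be such that every
coordinate `p_{ij} = ∏_{e ∈ i↝j} θ̂(e)` (for distinct leaves `i, j`) of
`p = φ_T(θ̂)` is nonzero.  Then the fiber `{θ : E(T) → ℂ | φ_T(θ) = p}` is a
finite set with exactly `2^{#Int(T)}` elements. -/
theorem card_fiber_of_path_map
    {V : Type*} [Fintype V] [DecidableEq V]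
    (G : SimpleGraph V) [DecidableRel G.Adj] (hG : G.IsTree)
    (hphylo : ∀ v : V, 2 ≤ G.degree v → 3 ≤ G.degree v)
    (hedge : G.edgeFinset.Nonempty)
    (θhat : G.edgeSet → ℂ)
    (hp : ∀ i j : V, i ∈ leafFinset G → j ∈ leafFinset G → i ≠ j →
      pathProd G hG θhat i j ≠ 0) :
    {θ : G.edgeSet → ℂ | ∀ i j : V, i ∈ leafFinset G → j ∈ leafFinset G →
        i ≠ j → pathProd G hG θ i j = pathProd G hG θhat i j}.Finite ∧
    {θ : G.edgeSet → ℂ | ∀ i j : V, i ∈ leafFinset G → j ∈ leafFinset G →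
        i ≠ j → pathProd G hG θ i j = pathProd G hG θhat i j}.ncard
      = 2 ^ (internalFinset G).card := by
  classical
  have leaf_iff : ∀ x : V, x ∈ leafFinset G ↔ G.degree x = 1 := by
    intro x; simp [leafFinset]
  have int_iff : ∀ x : V, x ∈ internalFinset G ↔ 2 ≤ G.degree x := by
    intro x; simp [internalFinset]
  set fhat := extE G θhat with hfhatdef
  have hpw : ∀ a b : V, G.degree a = 1 → G.degree b = 1 → a ≠ b →
      wprod fhat (treePath G hG a b) ≠ 0 := by
    intro a b ha hb hab
    rw [← pathProd_eq_wprod]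
    exact hp a b ((leaf_iff a).mpr ha) ((leaf_iff b).mpr hb) hab
  have hfhat_ne : ∀ e ∈ G.edgeSet, fhat e ≠ 0 := by
    intro e he
    induction e with
    | _ u v =>
      obtain ⟨a, b, ha, hb, hab, hmem⟩ := edge_on_leaf_path G hG (G.mem_edgeSet.1 he)
      exact fun h0 => hpw a b ha hb hab (wprod_eq_zero_of_mem hmem h0)
  set Φ : Finset V → (G.edgeSet → ℂ) := fun S e => epsSign S e.1 * θhat e with hΦdef
  have hchi_leaf : ∀ S : Finset V, S ⊆ internalFinset G → ∀ x : V,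
      G.degree x = 1 → chi S x = 1 := by
    intro S hS x hx
    unfold chi
    rw [if_neg]
    intro hxS
    have := (int_iff x).mp (hS hxS)
    omega
  -- forward inclusion : every sign flip lies in the fiber
  have hmem_fiber : ∀ S ∈ (internalFinset G).powerset, Φ S ∈
      {θ : G.edgeSet → ℂ | ∀ i j : V, i ∈ leafFinset G → j ∈ leafFinset G →
        i ≠ j → pathProd G hG θ i j = pathProd G hG θhat i j} := by
    intro S hS
    rw [Finset.mem_powerset] at hS
    intro i j hi hj hij
    rw [pathProd_eq_wprod, pathProd_eq_wprod]
    have h1 : wprod (extE G (Φ S)) (treePath G hG i j)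
        = wprod (fun e => epsSign S e * fhat e) (treePath G hG i j) := by
      apply wprod_congr
      intro e he
      have heE : e ∈ G.edgeSet := (treePath G hG i j).edges_subset_edgeSet he
      show extE G (Φ S) e = epsSign S e * fhat e
      rw [hfhatdef, extE_apply G _ heE, extE_apply G _ heE]
    rw [h1, wprod_mul, wprod_epsSign, hchi_leaf S hS i ((leaf_iff i).mp hi),
      hchi_leaf S hS j ((leaf_iff j).mp hj)]
    ring
  -- injectivity
  have hinj : Set.InjOn Φ ↑((internalFinset G).powerset) := by
    intro S hS S' hS' hSS
    rw [Finset.mem_coe, Finset.mem_powerset] at hS hS'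
    have hchiedge : ∀ ⦃x y : V⦄, G.Adj x y →
        chi S x * chi S y = chi S' x * chi S' y := by
      intro x y hxy
      have he : s(x, y) ∈ G.edgeSet := G.mem_edgeSet.2 hxy
      have h1 := congrFun hSS ⟨s(x, y), he⟩
      have hθ0 : θhat ⟨s(x, y), he⟩ ≠ 0 := by
        rw [← extE_apply G θhat he, ← hfhatdef]
        exact hfhat_ne _ he
      have h2 : epsSign S s(x, y) = epsSign S' s(x, y) := by
        have := h1
        simp only [hΦdef] at this
        exact mul_right_cancel₀ hθ0 this
      rwa [epsSign_mk, epsSign_mk] at h2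
    have ht : ∀ (x y : V) (w : G.Walk x y),
        chi S x * chi S' x = chi S y * chi S' y := by
      intro x y w
      induction w with
      | nil => rfl
      | cons h p ih =>
        rename_i x' y' z'
        have h1 := hchiedge h
        rw [← ih]
        have c1 := chi_mul_self S y'
        have c2 := chi_mul_self S' y'
        have c3 := chi_mul_self S' x'
        linear_combination (chi S y' * chi S' x') * h1
          - (chi S x' * chi S' x') * c1 + (chi S y' * chi S' y') * c3
    obtain ⟨e0, he0⟩ := hedge
    rw [SimpleGraph.mem_edgeFinset] at he0
    obtain ⟨a0, ha0deg, -⟩ : ∃ a, G.degree a = 1 ∧ True := by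
      induction e0 with
      | _ x0 y0 =>
        obtain ⟨a, ha, -⟩ := exists_leaf_branch G hG (G.mem_edgeSet.1 he0)
        exact ⟨a, ha, trivial⟩
    have hchia0 : ∀ T : Finset V, T ⊆ internalFinset G → chi T a0 = 1 := by
      intro T hT
      unfold chi
      rw [if_neg]
      intro hmem
      have := (int_iff a0).mp (hT hmem)
      omega
    have hone : ∀ x : V, chi S x * chi S' x = 1 := by
      intro x
      obtain ⟨w⟩ := hG.isConnected x a0
      rw [ht x a0 w, hchia0 S hS, hchia0 S' hS']
      ring
    ext x
    have hx := hone x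
    unfold chi at hx
    by_cases h1 : x ∈ S <;> by_cases h2 : x ∈ S' <;>
      simp only [h1, h2, if_true, if_false, if_pos, if_neg] at hx
    · simp [h1, h2]
    · exfalso; norm_num at hx
    · exfalso; norm_num at hx
    · simp [h1, h2]
  -- surjectivity
  have hsur : ∀ θ ∈ {θ : G.edgeSet → ℂ | ∀ i j : V, i ∈ leafFinset G →
      j ∈ leafFinset G → i ≠ j → pathProd G hG θ i j = pathProd G hG θhat i j},
      ∃ S ∈ (internalFinset G).powerset, θ = Φ S := by
    intro θ hθ
    simp only [Set.mem_setOf_eq] at hθ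
    set f := extE G θ with hfdef
    have hEq : ∀ a b : V, G.degree a = 1 → G.degree b = 1 → a ≠ b →
        wprod f (treePath G hG a b) = wprod fhat (treePath G hG a b) := by
      intro a b ha hb hab
      rw [hfdef, hfhatdef, ← pathProd_eq_wprod, ← pathProd_eq_wprod]
      exact hθ a b ((leaf_iff a).mpr ha) ((leaf_iff b).mpr hb) hab
    have hf_ne : ∀ e ∈ G.edgeSet, f e ≠ 0 := by
      intro e he
      induction e with
      | _ u v =>
        obtain ⟨a, b, ha, hb, hab, hmem⟩ := edge_on_leaf_path G hG (G.mem_edgeSet.1 he)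
        intro h0
        exact hpw a b ha hb hab
          (by rw [← hEq a b ha hb hab]; exact wprod_eq_zero_of_mem hmem h0)
    have hRnz : ∀ x y : V, wprod f (treePath G hG x y) ≠ 0 := fun x y =>
      wprod_ne_zero fun e he => hf_ne e ((treePath G hG x y).edges_subset_edgeSet he)
    have hR'nz : ∀ x y : V, wprod fhat (treePath G hG x y) ≠ 0 := fun x y =>
      wprod_ne_zero fun e he => hfhat_ne e ((treePath G hG x y).edges_subset_edgeSet he)
    set q : V → V → ℂ :=
      fun x y => wprod f (treePath G hG x y) / wprod fhat (treePath G hG x y) with hqdef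
    have hqnz : ∀ x y : V, q x y ≠ 0 := fun x y => div_ne_zero (hRnz x y) (hR'nz x y)
    have key0 : ∀ v a b : V, G.degree a = 1 → G.degree b = 1 → a ≠ b →
        v ∈ (treePath G hG a b).support → q v a * q v b = 1 := by
      intro v a b ha hb hab hmem
      have hsf := wprod_tp_split G hG f hmem
      have hsh := wprod_tp_split G hG fhat hmem
      rw [wprod_tp_symm G hG f a v] at hsf
      rw [wprod_tp_symm G hG fhat a v] at hsh
      have heq := hEq a b ha hb hab
      rw [hsf, hsh] at heq
      simp only [hqdef]
      rw [div_mul_div_comm,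
        div_eq_one_iff_eq (mul_ne_zero (hR'nz v a) (hR'nz v b))]
      exact heq
    have hsig : ∀ v : V, ∃ s : ℂ, s * s = 1 ∧
        (∀ a : V, G.degree a = 1 → a ≠ v → q v a = s) ∧ (G.degree v = 1 → s = 1) := by
      intro v
      by_cases hv1 : G.degree v = 1
      · refine ⟨1, by norm_num, ?_, fun _ => rfl⟩
        intro a ha hav
        simp only [hqdef]
        rw [hEq v a hv1 ha (fun h => hav h.symm)]
        exact div_self (hR'nz v a)
      · have hv2 : 2 ≤ G.degree v := by
          have := degree_pos_s4 G hG hedge v; omega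
        have hv3 : 3 ≤ G.degree v := hphylo v hv2
        have hcard : 2 < (G.neighborFinset v).card := by
          rw [G.card_neighborFinset_eq_degree]; omega
        obtain ⟨u₁, u₂, u₃, hu₁, hu₂, hu₃, h12, h13, h23⟩ := Finset.two_lt_card_iff.mp hcard
        rw [SimpleGraph.mem_neighborFinset] at hu₁ hu₂ hu₃
        obtain ⟨a₁, ha₁, hb₁⟩ := exists_leaf_branch G hG hu₁
        obtain ⟨a₂, ha₂, hb₂⟩ := exists_leaf_branch G hG hu₂
        obtain ⟨a₃, ha₃, hb₃⟩ := exists_leaf_branch G hG hu₃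
        have r12 : q v a₁ * q v a₂ = 1 := by
          obtain ⟨hne, hmem⟩ := branch_path G hG hu₁ hu₂ h12 hb₁ hb₂
          exact key0 v a₁ a₂ ha₁ ha₂ hne hmem
        have r13 : q v a₁ * q v a₃ = 1 := by
          obtain ⟨hne, hmem⟩ := branch_path G hG hu₁ hu₃ h13 hb₁ hb₃
          exact key0 v a₁ a₃ ha₁ ha₃ hne hmem
        have r23 : q v a₂ * q v a₃ = 1 := by
          obtain ⟨hne, hmem⟩ := branch_path G hG hu₂ hu₃ h23 hb₂ hb₃
          exact key0 v a₂ a₃ ha₂ ha₃ hne hmem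
        have hq23 : q v a₂ = q v a₃ := mul_left_cancel₀ (hqnz v a₁) (r12.trans r13.symm)
        have hs2 : q v a₂ * q v a₂ = 1 := by
          nth_rewrite 2 [hq23]
          exact r23
        have hs1 : q v a₁ = q v a₂ := by
          apply mul_right_cancel₀ (hqnz v a₂)
          rw [r12, hs2]
        have hs11 : q v a₁ * q v a₁ = 1 := by rw [hs1]; exact hs2
        refine ⟨q v a₁, hs11, ?_, fun h => absurd h hv1⟩
        intro a ha hav
        obtain ⟨u', hadj', hvsup, -⟩ := tp_first_edge G hG (fun h => hav h.symm)
        rcases eq_or_ne u' u₁ with heq | hneu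
        · have hneu2 : u' ≠ u₂ := heq ▸ h12
          obtain ⟨hne, hmem⟩ := branch_path G hG hadj' hu₂ hneu2 hvsup hb₂
          have hr := key0 v a a₂ ha ha₂ hne hmem
          apply mul_right_cancel₀ (hqnz v a₂)
          rw [hr, r12]
        · obtain ⟨hne, hmem⟩ := branch_path G hG hadj' hu₁ hneu hvsup hb₁
          have hr := key0 v a a₁ ha ha₁ hne hmem
          apply mul_right_cancel₀ (hqnz v a₁)
          rw [hr, hs11]
    choose σ hσ1 hσ2 hσ3 using hsig
    have hedgerel : ∀ ⦃u v : V⦄, G.Adj u v → f s(u, v) = σ u * σ v * fhat s(u, v) := by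
      intro u v h
      obtain ⟨a, ha1, hva⟩ := exists_leaf_branch G hG h.symm
      have htpva : treePath G hG v a = Walk.cons h.symm (treePath G hG u a) :=
        tp_cons G hG h.symm hva
      have hav : a ≠ v := fun e => hva (e ▸ (treePath G hG u a).end_mem_support)
      have hqva : q v a = σ v := hσ2 v a ha1 hav
      have hfe0 : fhat s(v, u) ≠ 0 := hfhat_ne _ (G.mem_edgeSet.2 h.symm)
      have hq' : q v a = f s(v, u) / fhat s(v, u) * q u a := by
        simp only [hqdef]
        rw [htpva, wprod_cons, wprod_cons, mul_div_mul_comm]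
      have hqua : q u a = σ u := by
        rcases eq_or_ne a u with rfl | hau
        · rw [hσ3 a ha1]
          simp only [hqdef]
          rw [tp_nil G hG]
          simp
        · exact hσ2 u a ha1 hau
      rw [hqva, hqua] at hq'
      have hq2 : σ v * σ u = f s(v, u) / fhat s(v, u) := by
        rw [hq', mul_assoc, hσ1 u, mul_one]
      rw [eq_div_iff hfe0] at hq2
      rw [Sym2.eq_swap (a := u) (b := v), ← hq2]
      ring
    set S : Finset V := Finset.univ.filter (fun x => σ x = -1) with hSdef
    have hσpm : ∀ x : V, σ x = 1 ∨ σ x = -1 := fun x => mul_self_eq_one_iff.mp (hσ1 x)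
    have hmemS : ∀ x : V, x ∈ S ↔ σ x = -1 := by
      intro x
      simp only [hSdef, Finset.mem_filter, Finset.mem_univ, true_and]
    have hchiσ : ∀ x : V, chi S x = σ x := by
      intro x
      unfold chi
      by_cases hx : x ∈ S
      · rw [if_pos hx, (hmemS x).mp hx]
      · rw [if_neg hx]
        rcases hσpm x with h | h
        · exact h.symm
        · exact absurd ((hmemS x).mpr h) hx
    refine ⟨S, Finset.mem_powerset.mpr ?_, ?_⟩
    · intro x hx
      rw [int_iff]
      have hxσ : σ x = -1 := (hmemS x).mp hx
      have hd := degree_pos_s4 G hG hedge x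
      by_contra hge
      have hx1 : G.degree x = 1 := by omega
      rw [hσ3 x hx1] at hxσ
      norm_num at hxσ
    · funext e
      rcases e with ⟨e, he⟩
      revert he
      induction e with
      | _ u v =>
        intro he
        have hadj : G.Adj u v := G.mem_edgeSet.1 he
        have h1 : θ ⟨s(u, v), he⟩ = f s(u, v) := by
          rw [hfdef, extE_apply G θ he]
        have h2 : θhat ⟨s(u, v), he⟩ = fhat s(u, v) := by
          rw [hfhatdef, extE_apply G θhat he]
        show θ ⟨s(u, v), he⟩ = epsSign S s(u, v) * θhat ⟨s(u, v), he⟩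
        rw [h1, h2, hedgerel hadj, epsSign_mk, hchiσ u, hchiσ v]
  have hset : {θ : G.edgeSet → ℂ | ∀ i j : V, i ∈ leafFinset G → j ∈ leafFinset G →
        i ≠ j → pathProd G hG θ i j = pathProd G hG θhat i j}
      = Φ '' ↑((internalFinset G).powerset) := by
    ext θ
    constructor
    · intro hθ
      obtain ⟨S, hS, rfl⟩ := hsur θ hθ
      exact ⟨S, hS, rfl⟩
    · rintro ⟨S, hS, rfl⟩
      exact hmem_fiber S hS
  constructor
  · rw [hset]
    exact ((internalFinset G).powerset.finite_toSet).image Φ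
  · rw [hset, Set.ncard_image_of_injOn hinj, Set.ncard_coe_finset,
      Finset.card_powerset]
end

section
/- Let T be a phylogenetic tree (a finite tree in which every internal vertex has degree at least 3) with at least one edge, let θ̂ : E(T) → ℂ be such that every coordinate of φ_T(θ̂) is nonzero, and let θ : E(T) → ℂ satisfy φ_T(θ) = φ_T(θ̂). Then for every edge e ∈ E(T), either θ(e) = θ̂(e) or θ(e) = −θ̂(e). -/
open SimpleGraph Finset

namespace TreeAux

open SimpleGraph Walk
set_option linter.unusedSectionVars false

variable {V : Type*} [Fintype V] [DecidableEq V] {G : SimpleGraph V} [DecidableRel G.Adj]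

lemma tp_isPath (hG : G.IsTree) (u v : V) : (treePath G hG u v).IsPath :=
  (hG.existsUnique_path u v).choose_spec.1

lemma tp_unique (hG : G.IsTree) {u v : V} (p : G.Walk u v) (hp : p.IsPath) :
    p = treePath G hG u v :=
  (hG.existsUnique_path u v).choose_spec.2 p hp

open Classical in
noncomputable def Θ (G : SimpleGraph V) (θ : G.edgeSet → ℂ) (s : Sym2 V) : ℂ :=
  if h : s ∈ G.edgeSet then θ ⟨s, h⟩ else 1

lemma Θ_edge (θ : G.edgeSet → ℂ) {s : Sym2 V} (h : s ∈ G.edgeSet) :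
    Θ G θ s = θ ⟨s, h⟩ := dif_pos h

noncomputable def wProd (θ : G.edgeSet → ℂ) {u v : V} (w : G.Walk u v) : ℂ :=
  (w.edges.map (Θ G θ)).prod

lemma pathProd_eq (hG : G.IsTree) (θ : G.edgeSet → ℂ) (u v : V) :
    pathProd G hG θ u v = wProd θ (treePath G hG u v) := by
  unfold pathProd wProd
  have h1 : ((treePath G hG u v).edges.attach.map
      (fun e => θ ⟨e.1, (treePath G hG u v).edges_subset_edgeSet e.2⟩))
      = (treePath G hG u v).edges.attach.map (fun e => Θ G θ e.1) := by
    apply List.map_congr_left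
    intro x _
    exact (Θ_edge θ ((treePath G hG u v).edges_subset_edgeSet x.2)).symm
  rw [h1]
  rw [show ((treePath G hG u v).edges.attach.map (fun e => Θ G θ e.1))
        = ((treePath G hG u v).edges.attach.map Subtype.val).map (Θ G θ) by
      rw [List.map_map]; rfl]
  simp

lemma tp_self (hG : G.IsTree) (u : V) : treePath G hG u u = Walk.nil :=
  (tp_unique hG _ IsPath.nil).symm

lemma tp_symm (hG : G.IsTree) (u v : V) :
    treePath G hG v u = (treePath G hG u v).reverse :=
  (tp_unique hG _ (tp_isPath hG u v).reverse).symm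

lemma mem_supp_symm (hG : G.IsTree) {u v x : V} (h : x ∈ (treePath G hG u v).support) :
    x ∈ (treePath G hG v u).support := by
  rw [tp_symm hG, Walk.support_reverse, List.mem_reverse]; exact h

lemma pp_self (hG : G.IsTree) (θ : G.edgeSet → ℂ) (u : V) : pathProd G hG θ u u = 1 := by
  rw [pathProd_eq, tp_self]; simp [wProd]

lemma pp_symm (hG : G.IsTree) (θ : G.edgeSet → ℂ) (u v : V) :
    pathProd G hG θ u v = pathProd G hG θ v u := by
  rw [pathProd_eq, pathProd_eq, tp_symm hG u v, wProd, wProd, Walk.edges_reverse,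
    List.map_reverse, List.prod_reverse]

lemma tp_take (hG : G.IsTree) {u v w : V} (h : w ∈ (treePath G hG u v).support) :
    (treePath G hG u v).takeUntil w h = treePath G hG u w :=
  tp_unique hG _ ((tp_isPath hG u v).takeUntil h)

lemma tp_drop (hG : G.IsTree) {u v w : V} (h : w ∈ (treePath G hG u v).support) :
    (treePath G hG u v).dropUntil w h = treePath G hG w v :=
  tp_unique hG _ ((tp_isPath hG u v).dropUntil h)

lemma supp_drop_sub (hG : G.IsTree) {x u z : V} (h : z ∈ (treePath G hG x u).support) :
    (treePath G hG z u).support ⊆ (treePath G hG x u).support := by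
  rw [← tp_drop hG h]; exact Walk.support_dropUntil_subset _ h

lemma supp_take_sub (hG : G.IsTree) {x u z : V} (h : z ∈ (treePath G hG x u).support) :
    (treePath G hG x z).support ⊆ (treePath G hG x u).support := by
  rw [← tp_take hG h]; exact Walk.support_takeUntil_subset _ h

lemma isPath_concat' {u v w : V} {p : G.Walk u v} (hp : p.IsPath) (h : G.Adj v w)
    (hw : w ∉ p.support) : (p.concat h).IsPath := by
  rw [Walk.isPath_def, Walk.support_concat]
  rw [List.nodup_append]
  exact ⟨hp.support_nodup, List.nodup_singleton _, by
    intro a ha b hb hab; rw [List.mem_singleton] at hb; rw [hab, hb] at ha; exact hw ha⟩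

lemma tp_concat (hG : G.IsTree) {x v w : V} (h : G.Adj v w)
    (hv : w ∉ (treePath G hG x v).support) :
    treePath G hG x w = (treePath G hG x v).concat h :=
  (tp_unique hG _ (isPath_concat' (tp_isPath hG x v) h hv)).symm

lemma pp_concat (hG : G.IsTree) (θ : G.edgeSet → ℂ) {x v w : V} (h : G.Adj v w)
    (hv : w ∉ (treePath G hG x v).support) :
    pathProd G hG θ x w = pathProd G hG θ x v * Θ G θ s(v, w) := by
  rw [pathProd_eq, pathProd_eq, tp_concat hG h hv, wProd, wProd, Walk.edges_concat]
  simp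

lemma not_both_sides (hG : G.IsTree) {u v x : V} (h : G.Adj u v)
    (hx1 : v ∉ (treePath G hG x u).support) (hx2 : u ∉ (treePath G hG x v).support) :
    False := by
  have h1 := tp_concat hG h hx1
  apply hx2
  rw [h1, Walk.support_concat, List.mem_append]
  exact Or.inl ((treePath G hG x u).end_mem_support)


lemma side_disjoint (hG : G.IsTree) {u v x y : V} (h : G.Adj u v)
    (hx : v ∉ (treePath G hG x u).support) (hy : u ∉ (treePath G hG v y).support) :
    ∀ z ∈ (treePath G hG x u).support, z ∉ (treePath G hG v y).support := by
  intro z hz1 hz2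
  have h1 : v ∉ (treePath G hG z u).support := fun c => hx (supp_drop_sub hG hz1 c)
  have h2 : treePath G hG z v = (treePath G hG z u).concat h := tp_concat hG h h1
  have h3 : u ∈ (treePath G hG z v).support := by
    rw [h2, Walk.support_concat, List.mem_append]
    exact Or.inl (treePath G hG z u).end_mem_support
  have h4 : u ∉ (treePath G hG v z).support := fun c => hy (supp_take_sub hG hz2 c)
  exact h4 (mem_supp_symm hG h3)

lemma glue (hG : G.IsTree) (θ : G.edgeSet → ℂ) {u v x y : V} (h : G.Adj u v)
    (hx : v ∉ (treePath G hG x u).support) (hy : u ∉ (treePath G hG v y).support) :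
    pathProd G hG θ x y
      = pathProd G hG θ x u * Θ G θ s(u, v) * pathProd G hG θ v y := by
  have hW : ((treePath G hG x u).append (Walk.cons h (treePath G hG v y))).IsPath := by
    rw [Walk.isPath_def, Walk.support_append, Walk.support_cons, List.tail_cons,
      List.nodup_append]
    exact ⟨(tp_isPath hG x u).support_nodup, (tp_isPath hG v y).support_nodup,
      fun a ha b hb hab => side_disjoint hG h hx hy a ha (by rw [hab]; exact hb)⟩
  have hxy : treePath G hG x y
      = (treePath G hG x u).append (Walk.cons h (treePath G hG v y)) :=
    (tp_unique hG _ hW).symm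
  rw [pathProd_eq, pathProd_eq, pathProd_eq, hxy, wProd, wProd, wProd,
    Walk.edges_append, Walk.edges_cons, List.map_append, List.prod_append,
    List.map_cons, List.prod_cons]
  ring

lemma tp_second (hG : G.IsTree) {u n a : V} (h : G.Adj u n)
    (hmem : n ∈ (treePath G hG u a).support) :
    treePath G hG u a = Walk.cons h (treePath G hG n a) := by
  have hun : treePath G hG u n = Walk.cons h Walk.nil := by
    refine (tp_unique hG _ ?_).symm
    rw [Walk.cons_isPath_iff]
    exact ⟨Walk.IsPath.nil, by simp [h.ne]⟩
  have hspec := (treePath G hG u a).take_spec hmem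
  rw [tp_take hG hmem, tp_drop hG hmem, hun] at hspec
  simpa using hspec.symm

lemma nbr_eq (hG : G.IsTree) {u n n' a : V} (h : G.Adj u n) (h' : G.Adj u n')
    (hm : n ∈ (treePath G hG u a).support) (hm' : n' ∈ (treePath G hG u a).support) :
    n = n' := by
  have e1 := tp_second hG h hm
  have e2 := tp_second hG h' hm'
  have hs := congrArg Walk.support (e1.symm.trans e2)
  rw [Walk.support_cons, Walk.support_cons] at hs
  have hs' := List.tail_eq_of_cons_eq hs
  have h2 := congrArg List.head? hs'
  rw [Walk.support_eq_cons (treePath G hG n a), Walk.support_eq_cons (treePath G hG n' a)] at h2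
  simp only [List.head?_cons, Option.some.injEq] at h2; exact h2


lemma exists_leaf (hG : G.IsTree) {u v : V} (h : G.Adj u v) :
    ∃ a, G.degree a = 1 ∧ v ∉ (treePath G hG a u).support := by
  classical
  set S : Finset V := Finset.univ.filter (fun a => v ∉ (treePath G hG a u).support) with hS
  have hu : u ∈ S := by
    simp only [hS, Finset.mem_filter, Finset.mem_univ, true_and, tp_self hG]
    simp [h.ne']
  obtain ⟨b, hbS, hmax⟩ := S.exists_max_image (fun a => (treePath G hG a u).length) ⟨u, hu⟩
  have hbv : v ∉ (treePath G hG b u).support := by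
    simpa [hS] using hbS
  refine ⟨b, ?_, hbv⟩
  by_contra hdeg
  -- In every case we produce a neighbor b' of b with b' ∉ supp(tp b u) and v ≠ b'.
  have key : ∀ b' : V, G.Adj b b' → b' ∉ (treePath G hG b u).support → v ≠ b' → False := by
    intro b' hb' hb'not hvb'
    have hpath : (Walk.cons hb'.symm (treePath G hG b u)).IsPath := by
      rw [Walk.cons_isPath_iff]; exact ⟨tp_isPath hG b u, hb'not⟩
    have htp : treePath G hG b' u = Walk.cons hb'.symm (treePath G hG b u) :=
      (tp_unique hG _ hpath).symm
    have hb'S : b' ∈ S := by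
      simp only [hS, Finset.mem_filter, Finset.mem_univ, true_and, htp, Walk.support_cons,
        List.mem_cons]
      push_neg
      exact ⟨hvb', hbv⟩
    have hle := hmax b' hb'S
    rw [htp, Walk.length_cons] at hle
    omega
  by_cases hbu : b = u
  · subst hbu
    have hd1 : 0 < G.degree b := (SimpleGraph.degree_pos_iff_exists_adj G _).mpr ⟨v, h⟩
    have hvmem : v ∈ G.neighborFinset b := by rwa [SimpleGraph.mem_neighborFinset]
    have hdegdef : G.degree b = (G.neighborFinset b).card := rfl
    have hcard : 0 < ((G.neighborFinset b).erase v).card := by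
      rw [Finset.card_erase_of_mem hvmem]; omega
    obtain ⟨b', hb'mem⟩ := Finset.card_pos.mp hcard
    have hb'v : b' ≠ v := (Finset.mem_erase.mp hb'mem).1
    have hb' : G.Adj b b' := by
      have := (Finset.mem_erase.mp hb'mem).2
      rwa [SimpleGraph.mem_neighborFinset] at this
    refine key b' hb' ?_ (Ne.symm hb'v)
    rw [tp_self hG]
    simp [hb'.ne']
  · obtain ⟨c, hbc, q, hq⟩ := Walk.exists_eq_cons_of_ne hbu (treePath G hG b u)
    have hd1 : 0 < G.degree b := (SimpleGraph.degree_pos_iff_exists_adj G _).mpr ⟨c, hbc⟩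
    have hcmem : c ∈ G.neighborFinset b := by rwa [SimpleGraph.mem_neighborFinset]
    have hdegdef : G.degree b = (G.neighborFinset b).card := rfl
    have hcard : 0 < ((G.neighborFinset b).erase c).card := by
      rw [Finset.card_erase_of_mem hcmem]; omega
    obtain ⟨b', hb'mem⟩ := Finset.card_pos.mp hcard
    have hb'c : b' ≠ c := (Finset.mem_erase.mp hb'mem).1
    have hb' : G.Adj b b' := by
      have := (Finset.mem_erase.mp hb'mem).2
      rwa [SimpleGraph.mem_neighborFinset] at this
    have hcsupp : c ∈ (treePath G hG b u).support := by
      rw [hq, Walk.support_cons]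
      exact List.mem_cons_of_mem _ q.start_mem_support
    refine key b' hb' ?_ ?_
    · intro hmem
      exact hb'c (nbr_eq hG hb' hbc hmem hcsupp)
    · intro hvb'
      subst hvb'
      -- v is adjacent to b; derive contradiction
      have hpath : (Walk.cons hb'.symm (treePath G hG b u)).IsPath := by
        rw [Walk.cons_isPath_iff]; exact ⟨tp_isPath hG b u, hbv⟩
      have htp1 : treePath G hG v u = Walk.cons hb'.symm (treePath G hG b u) :=
        (tp_unique hG _ hpath).symm
      have htp2 : treePath G hG v u = Walk.cons h.symm Walk.nil := by
        refine (tp_unique hG _ ?_).symm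
        rw [Walk.cons_isPath_iff]
        exact ⟨Walk.IsPath.nil, by simp [h.ne']⟩
      have hsupp := congrArg Walk.support (htp1.symm.trans htp2)
      rw [Walk.support_cons, Walk.support_cons, Walk.support_nil] at hsupp
      have := List.tail_eq_of_cons_eq hsupp
      rw [Walk.support_eq_cons (treePath G hG b u)] at this
      simp only [List.cons.injEq] at this
      exact hbu this.1


lemma leaf_pp_sign (hG : G.IsTree)
    (hphylo : ∀ v : V, 2 ≤ G.degree v → 3 ≤ G.degree v)
    (θhat θ : G.edgeSet → ℂ)
    (hp : ∀ i j : V, i ∈ leafFinset G → j ∈ leafFinset G → i ≠ j →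
      pathProd G hG θhat i j ≠ 0)
    (hθ : ∀ i j : V, i ∈ leafFinset G → j ∈ leafFinset G → i ≠ j →
      pathProd G hG θ i j = pathProd G hG θhat i j)
    (a u : V) (ha : G.degree a = 1) :
    pathProd G hG θ a u = pathProd G hG θhat a u ∨
      pathProd G hG θ a u = - pathProd G hG θhat a u := by
  have hmemleaf : ∀ x : V, G.degree x = 1 → x ∈ leafFinset G := by
    intro x hx; simp [leafFinset, hx]
  rcases eq_or_ne a u with rfl | hne
  · left; rw [pp_self, pp_self]
  by_cases hdu : G.degree u = 1
  · left; exact hθ a u (hmemleaf a ha) (hmemleaf u hdu) hne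
  -- u is an internal vertex, hence has degree at least 3
  obtain ⟨n0, h0, q0, hq0⟩ := Walk.exists_eq_cons_of_ne (Ne.symm hne) (treePath G hG u a)
  have hd1 : 0 < G.degree u := (SimpleGraph.degree_pos_iff_exists_adj G _).mpr ⟨n0, h0⟩
  have hd3 : 3 ≤ G.degree u := hphylo u (by omega)
  have hn0mem : n0 ∈ (treePath G hG u a).support := by
    rw [hq0, Walk.support_cons]; exact List.mem_cons_of_mem _ q0.start_mem_support
  have huniq : ∀ n : V, G.Adj u n → n ∈ (treePath G hG u a).support → n = n0 :=
    fun n hn hmem => nbr_eq hG hn h0 hmem hn0mem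
  have hdegdef : G.degree u = (G.neighborFinset u).card := rfl
  have hn0mem' : n0 ∈ G.neighborFinset u := by rwa [SimpleGraph.mem_neighborFinset]
  have hcard2 : 1 < ((G.neighborFinset u).erase n0).card := by
    rw [Finset.card_erase_of_mem hn0mem']; omega
  obtain ⟨n1, hn1m, n2, hn2m, hn12⟩ := Finset.one_lt_card.mp hcard2
  have h1 : G.Adj u n1 := by
    have := (Finset.mem_erase.mp hn1m).2; rwa [SimpleGraph.mem_neighborFinset] at this
  have h2 : G.Adj u n2 := by
    have := (Finset.mem_erase.mp hn2m).2; rwa [SimpleGraph.mem_neighborFinset] at this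
  have hn10 : n1 ≠ n0 := (Finset.mem_erase.mp hn1m).1
  have hn20 : n2 ≠ n0 := (Finset.mem_erase.mp hn2m).1
  have hn1a : n1 ∉ (treePath G hG a u).support :=
    fun hm => hn10 (huniq n1 h1 (mem_supp_symm hG hm))
  have hn2a : n2 ∉ (treePath G hG a u).support :=
    fun hm => hn20 (huniq n2 h2 (mem_supp_symm hG hm))
  obtain ⟨j, hjdeg, hju⟩ := exists_leaf hG h1.symm
  obtain ⟨k, hkdeg, hku⟩ := exists_leaf hG h2.symm
  have hju' : u ∉ (treePath G hG n1 j).support := fun hm => hju (mem_supp_symm hG hm)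
  have hn1k : n1 ∉ (treePath G hG k u).support := by
    intro hm
    rw [tp_concat hG h2.symm hku, Walk.support_concat,
      List.mem_append] at hm
    rcases hm with hm | hm
    · have hsub := supp_drop_sub hG hm
      have htpn : treePath G hG n1 n2 = Walk.cons h1.symm (Walk.cons h2 Walk.nil) := by
        refine (tp_unique hG _ ?_).symm
        rw [Walk.cons_isPath_iff, Walk.cons_isPath_iff]
        exact ⟨⟨Walk.IsPath.nil, by simp [h2.ne]⟩, by simp [h1.ne', hn12]⟩
      have humem : u ∈ (treePath G hG n1 n2).support := by rw [htpn]; simp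
      exact hku (hsub humem)
    · rw [List.mem_singleton] at hm
      exact h1.ne' hm
  have haj : a ≠ j := fun hh => not_both_sides hG h1 hn1a (by rw [hh]; exact hju)
  have hak : a ≠ k := fun hh => not_both_sides hG h2 hn2a (by rw [hh]; exact hku)
  have hkj : k ≠ j := fun hh => not_both_sides hG h1 hn1k (by rw [hh]; exact hju)
  -- the three gluing equations
  have e1 : pathProd G hG θ a u * Θ G θ s(u, n1) * pathProd G hG θ n1 j
      = pathProd G hG θhat a u * Θ G θhat s(u, n1) * pathProd G hG θhat n1 j := by
    rw [← glue hG θ h1 hn1a hju', ← glue hG θhat h1 hn1a hju']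
    exact hθ a j (hmemleaf a ha) (hmemleaf j hjdeg) haj
  have e2 : pathProd G hG θ a u * Θ G θ s(u, n2) * pathProd G hG θ k n2
      = pathProd G hG θhat a u * Θ G θhat s(u, n2) * pathProd G hG θhat k n2 := by
    rw [pp_symm hG θ k n2, pp_symm hG θhat k n2,
      ← glue hG θ h2 hn2a (fun hm => hku (mem_supp_symm hG hm)),
      ← glue hG θhat h2 hn2a (fun hm => hku (mem_supp_symm hG hm))]
    exact hθ a k (hmemleaf a ha) (hmemleaf k hkdeg) hak
  have e3 : pathProd G hG θ k n2 * Θ G θ s(u, n2) * Θ G θ s(u, n1) * pathProd G hG θ n1 j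
      = pathProd G hG θhat k n2 * Θ G θhat s(u, n2) * Θ G θhat s(u, n1)
          * pathProd G hG θhat n1 j := by
    rw [show (s(u, n2) : Sym2 V) = s(n2, u) from Sym2.eq_swap,
      ← pp_concat hG θ h2.symm hku, ← pp_concat hG θhat h2.symm hku,
      ← glue hG θ h1 hn1k hju', ← glue hG θhat h1 hn1k hju']
    exact hθ k j (hmemleaf k hkdeg) (hmemleaf j hjdeg) hkj
  have nz1 : pathProd G hG θhat a u * Θ G θhat s(u, n1) * pathProd G hG θhat n1 j ≠ 0 := by
    rw [← glue hG θhat h1 hn1a hju']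
    exact hp a j (hmemleaf a ha) (hmemleaf j hjdeg) haj
  have nz3 : pathProd G hG θhat k n2 * Θ G θhat s(u, n2) * Θ G θhat s(u, n1)
      * pathProd G hG θhat n1 j ≠ 0 := by
    rw [show (s(u, n2) : Sym2 V) = s(n2, u) from Sym2.eq_swap,
      ← pp_concat hG θhat h2.symm hku, ← glue hG θhat h1 hn1k hju']
    exact hp k j (hmemleaf k hkdeg) (hmemleaf j hjdeg) hkj
  have hX : pathProd G hG θ k n2 * Θ G θ s(u, n2) * Θ G θ s(u, n1)
      * pathProd G hG θ n1 j ≠ 0 := by rw [e3]; exact nz3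
  have key : pathProd G hG θ a u * pathProd G hG θ a u
        * (pathProd G hG θ k n2 * Θ G θ s(u, n2) * Θ G θ s(u, n1) * pathProd G hG θ n1 j)
      = pathProd G hG θhat a u * pathProd G hG θhat a u
        * (pathProd G hG θ k n2 * Θ G θ s(u, n2) * Θ G θ s(u, n1)
            * pathProd G hG θ n1 j) := by
    calc pathProd G hG θ a u * pathProd G hG θ a u
          * (pathProd G hG θ k n2 * Θ G θ s(u, n2) * Θ G θ s(u, n1) * pathProd G hG θ n1 j)
        = (pathProd G hG θ a u * Θ G θ s(u, n1) * pathProd G hG θ n1 j)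
          * (pathProd G hG θ a u * Θ G θ s(u, n2) * pathProd G hG θ k n2) := by ring
      _ = (pathProd G hG θhat a u * Θ G θhat s(u, n1) * pathProd G hG θhat n1 j)
          * (pathProd G hG θhat a u * Θ G θhat s(u, n2) * pathProd G hG θhat k n2) := by
            rw [e1, e2]
      _ = pathProd G hG θhat a u * pathProd G hG θhat a u
          * (pathProd G hG θhat k n2 * Θ G θhat s(u, n2) * Θ G θhat s(u, n1)
              * pathProd G hG θhat n1 j) := by ring
      _ = pathProd G hG θhat a u * pathProd G hG θhat a u
          * (pathProd G hG θ k n2 * Θ G θ s(u, n2) * Θ G θ s(u, n1)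
              * pathProd G hG θ n1 j) := by rw [e3]
  have hsq : pathProd G hG θ a u * pathProd G hG θ a u
      = pathProd G hG θhat a u * pathProd G hG θhat a u := mul_right_cancel₀ hX key
  exact mul_self_eq_mul_self_iff.mp hsq
end TreeAux


/-- **Part 1 of the proof of Theorem 8.**
Let `T = G` be a phylogenetic tree (every internal vertex has degree at
least 3) with at least one edge, let `θ̂ : E(T) → ℂ` be such that every
coordinate `p_{ij} = ∏_{e ∈ i↝j} θ̂(e)` (for distinct leaves `i, j`) of
`φ_T(θ̂)` is nonzero, and let `θ : E(T) → ℂ` satisfy `φ_T(θ) = φ_T(θ̂)`.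
Then for every edge `e` of `T`, either `θ(e) = θ̂(e)` or `θ(e) = −θ̂(e)`. -/
theorem fiber_entries_up_to_sign
    {V : Type*} [Fintype V] [DecidableEq V]
    (G : SimpleGraph V) [DecidableRel G.Adj] (hG : G.IsTree)
    (hphylo : ∀ v : V, 2 ≤ G.degree v → 3 ≤ G.degree v)
    (hedge : G.edgeFinset.Nonempty)
    (θhat : G.edgeSet → ℂ)
    (hp : ∀ i j : V, i ∈ leafFinset G → j ∈ leafFinset G → i ≠ j →
      pathProd G hG θhat i j ≠ 0)
    (θ : G.edgeSet → ℂ)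
    (hθ : ∀ i j : V, i ∈ leafFinset G → j ∈ leafFinset G → i ≠ j →
      pathProd G hG θ i j = pathProd G hG θhat i j) :
    ∀ e : G.edgeSet, θ e = θhat e ∨ θ e = -θhat e := by
  intro e
  obtain ⟨s, hs⟩ := e
  revert hs
  induction s using Sym2.ind with
  | _ u v =>
  intro hs
  have huv : G.Adj u v := G.mem_edgeSet.mp hs
  obtain ⟨a, ha, hav⟩ := TreeAux.exists_leaf hG huv
  obtain ⟨b, hb, hbu⟩ := TreeAux.exists_leaf hG huv.symm
  have hmemleaf : ∀ x : V, G.degree x = 1 → x ∈ leafFinset G := fun x hx => by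
    simp [leafFinset, hx]
  have hab : a ≠ b := fun hh =>
    TreeAux.not_both_sides hG huv hav (by rw [hh]; exact hbu)
  have hbu' : u ∉ (treePath G hG v b).support := fun hm =>
    hbu (TreeAux.mem_supp_symm hG hm)
  have eq0 : pathProd G hG θ a u * TreeAux.Θ G θ s(u, v) * pathProd G hG θ v b
      = pathProd G hG θhat a u * TreeAux.Θ G θhat s(u, v) * pathProd G hG θhat v b := by
    rw [← TreeAux.glue hG θ huv hav hbu', ← TreeAux.glue hG θhat huv hav hbu']
    exact hθ a b (hmemleaf a ha) (hmemleaf b hb) hab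
  have nz : pathProd G hG θhat a u * TreeAux.Θ G θhat s(u, v)
      * pathProd G hG θhat v b ≠ 0 := by
    rw [← TreeAux.glue hG θhat huv hav hbu']
    exact hp a b (hmemleaf a ha) (hmemleaf b hb) hab
  have h1 := mul_ne_zero_iff.mp nz
  have h2 := mul_ne_zero_iff.mp h1.1
  have nzA := h2.1
  have nzB := h1.2
  have sA := TreeAux.leaf_pp_sign hG hphylo θhat θ hp hθ a u ha
  have sB' := TreeAux.leaf_pp_sign hG hphylo θhat θ hp hθ b v hb
  have sB : pathProd G hG θ v b = pathProd G hG θhat v b ∨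
      pathProd G hG θ v b = - pathProd G hG θhat v b := by
    rw [TreeAux.pp_symm hG θ v b, TreeAux.pp_symm hG θhat v b]; exact sB'
  have hgoal : TreeAux.Θ G θ s(u, v) = TreeAux.Θ G θhat s(u, v) ∨
      TreeAux.Θ G θ s(u, v) = - TreeAux.Θ G θhat s(u, v) := by
    have hABne : pathProd G hG θhat a u * pathProd G hG θhat v b ≠ 0 :=
      mul_ne_zero nzA nzB
    rcases sA with hA | hA <;> rcases sB with hB | hB
    · left; apply mul_left_cancel₀ hABne; rw [hA, hB] at eq0; linear_combination eq0
    · right; apply mul_left_cancel₀ hABne; rw [hA, hB] at eq0; linear_combination -eq0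
    · right; apply mul_left_cancel₀ hABne; rw [hA, hB] at eq0; linear_combination -eq0
    · left; apply mul_left_cancel₀ hABne; rw [hA, hB] at eq0; linear_combination eq0
  rw [TreeAux.Θ_edge θ hs, TreeAux.Θ_edge θhat hs] at hgoal
  exact hgoal
end

section
/- Let n ≥ 1, let K be a symmetric n×n real matrix, let r ∈ {1,…,n}, and let K′ be the rerooted matrix associated to K and r. Then for every symmetric n×n real matrix S, with S′ the rerooted sample matrix associated to S and r, one has tr(S K) = tr(S′ K′). -/
/-!
Rerooting is a change of basis. Let `M` be the matrix of `x ↦ y` with `y_r = -x_r` and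
`y_i = x_i - x_r` for `i ≠ r`; it exchanges the roots `0` and `r` of the Laplacian on
`{0, …, n}` whose reduction at `0` is `K`, and `M * M = 1`. For symmetric `K` and `S` one has
`K′ = Mᵀ K M` and `S′ = M S Mᵀ`, so `tr(S′ K′) = tr(S K)` by cyclicity of the trace.
-/

open Finset Matrix

/-- The Farris transform coordinates `p` of a symmetric `n × n` matrix
`K = (k_{ij})` (with rows/columns thought of as indexed by `1, …, n`,
realized as `Fin n` via `i ↦ i.succ`), extended by a root index `0`:
`p_{0i} = p_{i0} = ∑_{j=1}^n k_{ij}` and `p_{ij} = −k_{ij}` for `i, j ≥ 1`. -/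
noncomputable def farrisP {n : ℕ} (K : Matrix (Fin n) (Fin n) ℝ) :
    Fin (n + 1) → Fin (n + 1) → ℝ := fun i j =>
  Fin.cases (motive := fun _ => ℝ)
    (Fin.cases (motive := fun _ => ℝ) 0 (fun j' => ∑ t, K j' t) j)
    (fun i' => Fin.cases (motive := fun _ => ℝ) (∑ t, K i' t)
      (fun j' => -K i' j') j) i

/-- The rerooted matrix `K′` associated to a symmetric matrix `K` and a new
root `r ∈ {1, …, n}`:  `K′_{rr} = ∑_{t=1}^n p_{0t}`, `K′_{rj} = K′_{jr} = −p_{0j}`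
for `j ≠ r`, `K′_{ii} = ∑_{t=0, t≠i}^n p_{it}` for `i ≠ r`, and
`K′_{ij} = −p_{ij}` for distinct `i, j ≠ r`. -/
noncomputable def rerootK {n : ℕ} (K : Matrix (Fin n) (Fin n) ℝ) (r : Fin n) :
    Matrix (Fin n) (Fin n) ℝ :=
  Matrix.of fun i j =>
    if i = r then
      (if j = r then ∑ t : Fin n, farrisP K 0 t.succ else -farrisP K 0 j.succ)
    else if j = r then -farrisP K 0 i.succ
    else if i = j then ∑ t ∈ Finset.univ.erase (i.succ : Fin (n + 1)), farrisP K i.succ t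
    else -farrisP K i.succ j.succ

/-- The rerooted sample matrix `S′` associated to a symmetric matrix
`S = (s_{ij})` and `r`:  `s′_{rr} = s_{rr}`, `s′_{rj} = s′_{jr} = s_{rr} − s_{rj}`
for `j ≠ r`, `s′_{ii} = s_{rr} + s_{ii} − 2 s_{ri}` for `i ≠ r`, and
`s′_{ij} = s_{rr} − s_{ri} − s_{rj} + s_{ij}` for distinct `i, j ≠ r`. -/
noncomputable def rerootS {n : ℕ} (S : Matrix (Fin n) (Fin n) ℝ) (r : Fin n) :
    Matrix (Fin n) (Fin n) ℝ :=
  Matrix.of fun i j =>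
    if i = r then (if j = r then S r r else S r r - S r j)
    else if j = r then S r r - S r i
    else if i = j then S r r + S i i - 2 * S r i
    else S r r - S r i - S r j + S i j

section ChangeOfBasis

variable {ι R : Type*} [Fintype ι] [DecidableEq ι] [CommRing R]

theorem Matrix.trace_conj_mul_conj_of_mul_eq_one {M N : Matrix ι ι R} (h : M * N = 1)
    (A B : Matrix ι ι R) : (N * A * Nᵀ * (Mᵀ * B * M)).trace = (A * B).trace := by
  have hT : Nᵀ * Mᵀ = 1 := by rw [← transpose_mul, h, transpose_one]
  calc (N * A * Nᵀ * (Mᵀ * B * M)).trace = (N * (A * B * M)).trace := by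
        simp only [Matrix.mul_assoc, ← Matrix.mul_assoc Nᵀ, hT, Matrix.one_mul]
    _ = (A * B * (M * N)).trace := by rw [trace_mul_comm, Matrix.mul_assoc]
    _ = (A * B).trace := by rw [h, Matrix.mul_one]

def rerootBasis (r : ι) : Matrix ι ι R :=
  of fun i j => if j = r then -1 else if i = j then 1 else 0

variable (r : ι) (A : Matrix ι ι R)

theorem rerootBasis_mul_apply (i j : ι) :
    ((rerootBasis r : Matrix ι ι R) * A) i j = if i = r then -A r j else A i j - A r j := by
  rw [mul_apply, ← Finset.add_sum_erase _ _ (mem_univ r)]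
  have hoff : ∀ a ∈ univ.erase r, rerootBasis r i a * A a j = if i = a then A a j else 0 :=
    fun a ha => by simp [rerootBasis, Finset.ne_of_mem_erase ha]
  rw [Finset.sum_congr rfl hoff, Finset.sum_ite_eq]
  split_ifs with hi <;> simp_all [rerootBasis, sub_eq_neg_add]

theorem mul_rerootBasis_apply (i j : ι) :
    (A * (rerootBasis r : Matrix ι ι R)) i j = if j = r then -∑ b, A i b else A i j := by
  split_ifs with hj <;> simp [mul_apply, rerootBasis, hj]

theorem transpose_rerootBasis_mul_apply (i j : ι) :
    ((rerootBasis r : Matrix ι ι R)ᵀ * A) i j = if i = r then -∑ a, A a j else A i j := by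
  rw [← transpose_apply (_ * A), transpose_mul, transpose_transpose, mul_rerootBasis_apply]
  simp only [transpose_apply]

theorem mul_transpose_rerootBasis_apply (i j : ι) :
    (A * (rerootBasis r : Matrix ι ι R)ᵀ) i j = if j = r then -A i r else A i j - A i r := by
  rw [← transpose_apply (A * _), transpose_mul, transpose_transpose, rerootBasis_mul_apply]
  simp only [transpose_apply]

theorem rerootBasis_mul_self : (rerootBasis r : Matrix ι ι R) * rerootBasis r = 1 := by
  ext i j
  rw [rerootBasis_mul_apply]
  by_cases hi : i = r <;> by_cases hj : j = r <;> by_cases hij : i = j <;>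
    simp_all [rerootBasis, one_apply, eq_comm]

end ChangeOfBasis

section Reroot

variable {n : ℕ}

@[simp] theorem farrisP_zero_succ (K : Matrix (Fin n) (Fin n) ℝ) (j : Fin n) :
    farrisP K 0 j.succ = ∑ t, K j t := rfl

@[simp] theorem farrisP_succ_zero (K : Matrix (Fin n) (Fin n) ℝ) (i : Fin n) :
    farrisP K i.succ 0 = ∑ t, K i t := rfl

@[simp] theorem farrisP_succ_succ (K : Matrix (Fin n) (Fin n) ℝ) (i j : Fin n) :
    farrisP K i.succ j.succ = -K i j := rfl

theorem sum_erase_farrisP_succ (K : Matrix (Fin n) (Fin n) ℝ) (i : Fin n) :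
    ∑ t ∈ univ.erase i.succ, farrisP K i.succ t = K i i := by
  rw [Finset.sum_erase_eq_sub (mem_univ _), Fin.sum_univ_succ]
  simp only [farrisP_succ_zero, farrisP_succ_succ, Finset.sum_neg_distrib]
  ring

theorem rerootS_eq {S : Matrix (Fin n) (Fin n) ℝ} (hS : S.IsSymm) (r : Fin n) :
    rerootS S r = rerootBasis r * S * (rerootBasis r)ᵀ := by
  ext i j
  simp only [mul_transpose_rerootBasis_apply, rerootBasis_mul_apply, hS.apply r i]
  by_cases hi : i = r <;> by_cases hj : j = r <;> by_cases hij : i = j <;>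
    simp_all [rerootS] <;> ring

theorem rerootK_eq {K : Matrix (Fin n) (Fin n) ℝ} (hK : K.IsSymm) (r : Fin n) :
    rerootK K r = (rerootBasis r)ᵀ * K * rerootBasis r := by
  ext i j
  simp only [rerootK, of_apply, mul_rerootBasis_apply, transpose_rerootBasis_mul_apply]
  split_ifs with hi hj hj hij
  · simp only [farrisP_zero_succ, Finset.sum_neg_distrib, neg_neg]
    exact Finset.sum_comm
  · simp only [farrisP_zero_succ, ← hK.apply]
  · simp only [farrisP_zero_succ]
  · rw [hij, sum_erase_farrisP_succ]
  · rw [farrisP_succ_succ, neg_neg]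

end Reroot

theorem trace_reroot_eq_general {n : ℕ}
    (K : Matrix (Fin n) (Fin n) ℝ) (hK : K.IsSymm) (r : Fin n)
    (S : Matrix (Fin n) (Fin n) ℝ) (hS : S.IsSymm) :
    (S * K).trace = (rerootS S r * rerootK K r).trace := by
  rw [rerootS_eq hS, rerootK_eq hK,
    trace_conj_mul_conj_of_mul_eq_one (rerootBasis_mul_self r)]

/-- **Trace invariance under rerooting** (part of the proof of Theorem 2).
For a symmetric matrix `K`, a root `r ∈ {1, …, n}` and any symmetric
matrix `S`, one has `tr(S K) = tr(S′ K′)`. -/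
theorem trace_reroot_eq {n : ℕ} (hn : 1 ≤ n)
    (K : Matrix (Fin n) (Fin n) ℝ) (hK : K.IsSymm) (r : Fin n)
    (S : Matrix (Fin n) (Fin n) ℝ) (hS : S.IsSymm) :
    (S * K).trace = (rerootS S r * rerootK K r).trace :=
  trace_reroot_eq_general K hK r S hS
end

section
/- Let n ≥ 1, let K be a symmetric n×n real matrix, let r ∈ {1,…,n}, and let K′ be the rerooted matrix associated to K and r. Then det K′ = det K. -/
open Finset Matrix

theorem Matrix.det_updateRow_neg_sum {ι R : Type*} [Fintype ι] [DecidableEq ι] [CommRing R]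
    (A : Matrix ι ι R) (j : ι) : (A.updateRow j fun i => -∑ k, A k i).det = -A.det := by
  have hrow : (fun i => -∑ k, A k i) = ∑ k, (-1 : R) • A k := by
    ext i
    simp [Finset.sum_apply]
  simpa [hrow] using det_updateRow_sum A j fun _ => -1

theorem Matrix.det_updateCol_neg_sum {ι R : Type*} [Fintype ι] [DecidableEq ι] [CommRing R]
    (A : Matrix ι ι R) (j : ι) : (A.updateCol j fun i => -∑ k, A i k).det = -A.det := by
  simpa [Finset.sum_neg_distrib] using det_updateCol_sum A j fun _ => -1

theorem rerootK_eq_updateCol_updateRow {n : ℕ} (K : Matrix (Fin n) (Fin n) ℝ) (hK : K.IsSymm)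
    (r : Fin n) :
    let L := K.updateRow r fun j => -∑ k, K k j
    rerootK K r = L.updateCol r fun i => -∑ k, L i k := by
  ext i j
  by_cases hi : i = r <;> by_cases hj : j = r
  · subst hi hj
    simp [rerootK, farrisP, Finset.sum_comm (f := fun a b => K a b)]
  · subst hi
    simp [rerootK, farrisP, hj, ← hK.apply j]
  · subst hj
    simp [rerootK, farrisP, hi]
  · by_cases hij : i = j
    · subst hij
      simp [rerootK, farrisP, hi, Finset.sum_erase_eq_sub, Fin.sum_univ_succ]
    · simp [rerootK, farrisP, hi, hj, hij]

theorem det_reroot_eq_general {n : ℕ}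
    (K : Matrix (Fin n) (Fin n) ℝ) (hK : K.IsSymm) (r : Fin n) :
    (rerootK K r).det = K.det := by
  rw [rerootK_eq_updateCol_updateRow K hK r, det_updateCol_neg_sum, det_updateRow_neg_sum,
    neg_neg]

/-- **Determinant invariance under rerooting** (part of the proof of
Theorem 2).  For a symmetric matrix `K` and a root `r ∈ {1, …, n}`,
`det K′ = det K`. -/
theorem det_reroot_eq {n : ℕ} (hn : 1 ≤ n)
    (K : Matrix (Fin n) (Fin n) ℝ) (hK : K.IsSymm) (r : Fin n) :
    (rerootK K r).det = K.det :=
  det_reroot_eq_general K hK r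
end

section
/- Let n ≥ 1, let K be a symmetric n×n real matrix, let r ∈ {1,…,n}, and let K′ be the rerooted matrix associated to K and r. Then K is positive definite if and only if K′ is positive definite. -/
open Finset Matrix

noncomputable def rerootA {n : ℕ} (r : Fin n) : Matrix (Fin n) (Fin n) ℝ :=
  Matrix.of fun i j => if j = r then -1 else if i = j then 1 else 0

lemma sum_split_aux {n : ℕ} (r : Fin n) (a b : Fin n → ℝ) :
    ∑ k, (if k = r then a k else b k) = (∑ k, b k) + (a r - b r) := by
  have h : ∀ k, (if k = r then a k else b k) = b k + (if k = r then a k - b k else 0) :=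
    fun k => by split <;> ring
  simp only [h, Finset.sum_add_distrib, Finset.sum_ite_eq' Finset.univ, Finset.mem_univ,
    if_true]

lemma rerootA_sq {n : ℕ} (r : Fin n) : rerootA r * rerootA r = 1 := by
  ext i j
  simp only [Matrix.mul_apply, rerootA, Matrix.of_apply, Matrix.one_apply, ite_mul]
  by_cases hj : j = r
  · simp only [hj, if_pos rfl, eq_self_iff_true, if_true]
    rw [sum_split_aux r (fun k => (-1:ℝ) * -1)
      (fun k => if i = k then (1:ℝ) * -1 else 0 * -1)]
    by_cases hi : i = r
    · simp [hi, Finset.sum_ite_eq]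
    · simp [hi, Ne.symm hi, Finset.sum_ite_eq]
  · simp only [if_neg hj]
    rw [sum_split_aux r (fun k => (-1:ℝ) * (if k = j then (1:ℝ) else 0))
      (fun k => if i = k then (1:ℝ) * (if k = j then (1:ℝ) else 0)
        else 0 * (if k = j then (1:ℝ) else 0))]
    by_cases hij : i = j
    · simp [hij, Ne.symm hj, Finset.sum_ite_eq, mul_ite, ite_mul]
    · simp [hij, Ne.symm hj, fun h : j = r => hj h, Finset.sum_ite_eq, mul_ite, ite_mul]

lemma mulA_apply {n : ℕ} (K : Matrix (Fin n) (Fin n) ℝ) (r : Fin n) (k j : Fin n) :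
    (K * rerootA r) k j = if j = r then -∑ l, K k l else K k j := by
  simp only [Matrix.mul_apply, rerootA, Matrix.of_apply]
  by_cases hj : j = r
  · simp [hj, ← Finset.sum_neg_distrib]
  · simp [hj, mul_ite, Finset.sum_ite_eq']

lemma At_mul_apply {n : ℕ} (r : Fin n) (M : Matrix (Fin n) (Fin n) ℝ) (i j : Fin n) :
    ((rerootA r)ᵀ * M) i j = if i = r then -∑ k, M k j else M i j := by
  simp only [Matrix.mul_apply, Matrix.transpose_apply, rerootA, Matrix.of_apply]
  by_cases hi : i = r
  · simp [hi, ← Finset.sum_neg_distrib]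
  · simp [hi, ite_mul, Finset.sum_ite_eq]

lemma reroot_eq {n : ℕ} (K : Matrix (Fin n) (Fin n) ℝ) (hK : K.IsSymm) (r : Fin n) :
    rerootK K r = (rerootA r)ᵀ * K * (rerootA r) := by
  ext i j
  rw [Matrix.mul_assoc, At_mul_apply]
  simp only [mulA_apply]
  simp only [rerootK, Matrix.of_apply]
  by_cases hi : i = r <;> by_cases hj : j = r <;> simp only [hi, hj, if_pos rfl, if_true,
    if_neg, eq_self_iff_true]
  · simp [farrisP]
  · simp only [if_false]
    simp only [farrisP, Fin.cases_zero, Fin.cases_succ, neg_inj]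
    exact Finset.sum_congr rfl fun k _ => hK.apply k j
  · simp only [if_false]
    simp [farrisP]
  · simp only [if_false]
    by_cases hij : i = j
    · rw [if_pos hij, hij]
      have htot : ∑ t : Fin (n + 1), farrisP K j.succ t = 0 := by
        rw [Fin.sum_univ_succ]
        simp [farrisP, Finset.sum_neg_distrib]
      rw [Finset.sum_erase_eq_sub (Finset.mem_univ _), htot]
      simp [farrisP]
    · rw [if_neg hij]
      simp [farrisP]

lemma posDef_conj_aux {n : ℕ} {K B : Matrix (Fin n) (Fin n) ℝ}
    (hK : K.PosDef) (hB : B * B = 1) : (Bᵀ * K * B).PosDef := by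
  have hBt : Bᵀ = Bᴴ := by
    ext i j; simp [Matrix.conjTranspose_apply]
  refine Matrix.PosDef.of_dotProduct_mulVec_pos ?_ ?_
  · rw [hBt]
    exact Matrix.isHermitian_conjTranspose_mul_mul B hK.1
  · intro x hx
    have hAx : B *ᵥ x ≠ 0 := by
      intro h
      apply hx
      have : B *ᵥ (B *ᵥ x) = x := by
        rw [Matrix.mulVec_mulVec, hB, Matrix.one_mulVec]
      rw [h, Matrix.mulVec_zero] at this
      exact this.symm
    have := hK.dotProduct_mulVec_pos hAx
    simpa [← Matrix.vecMul_vecMul, Matrix.mulVec_mulVec, Matrix.dotProduct_mulVec,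
      Matrix.vecMul_transpose, Matrix.mul_assoc] using this

/-- **Positive definiteness is preserved by rerooting** (part of the proof
of Theorem 2).  For a symmetric matrix `K` and a root `r ∈ {1, …, n}`,
`K` is positive definite if and only if `K′` is positive definite. -/
theorem posDef_reroot_iff {n : ℕ} (hn : 1 ≤ n)
    (K : Matrix (Fin n) (Fin n) ℝ) (hK : K.IsSymm) (r : Fin n) :
    K.PosDef ↔ (rerootK K r).PosDef := by
  constructor
  · intro h
    rw [reroot_eq K hK r]
    exact posDef_conj_aux h (rerootA_sq r)
  · intro h
    have hKeq : K = (rerootA r)ᵀ * rerootK K r * (rerootA r) := by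
      rw [reroot_eq K hK r, ← Matrix.mul_assoc, ← Matrix.mul_assoc,
        ← Matrix.transpose_mul, rerootA_sq r, Matrix.mul_assoc, Matrix.mul_assoc,
        rerootA_sq r, Matrix.transpose_one, Matrix.one_mul, Matrix.mul_one]
    rw [hKeq]
    exact posDef_conj_aux h (rerootA_sq r)
end

section
/- Let n ≥ 2 and let c_{ij} ∈ ℂ for 0 ≤ i, j ≤ n with c_{ij} = c_{ji} and c_{ii} = 0. Let C be the (n+2)×(n+2) symmetric matrix, with rows and columns indexed by {0,…,n} ∪ {ψ}, whose (i,j) entry is c_{ij} for 0 ≤ i, j ≤ n, whose (i,ψ) and (ψ,i) entries are n−1 for 0 ≤ i ≤ n, and whose (ψ,ψ) entry is 0. Assume that every principal submatrix of C of size at least 2 is invertible. If (θ_0,…,θ_n,ψ) ∈ ℂ^{n+2} is a nonzero vector satisfying θ_i · ((n−1)ψ + ∑_{j ∈ {0,…,n}, j ≠ i} c_{ij} θ_j) = 0 for every i ∈ {0,…,n} and ψ · (θ_0 + ⋯ + θ_n) = 0, then exactly one of the n+2 coordinates θ_0,…,θ_n,ψ is nonzero; i.e., the vector is a scalar multiple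 of a standard basis vector of ℂ^{n+2}. -/
open Finset Matrix

/-- The coefficient matrix `C` of the linear part of the homogenized score
equation system of the Brownian motion tree model on the star tree with
`n + 1` leaves: the rows and columns are indexed by `{0, …, n} ∪ {ψ}`
(realized as `Fin (n+1) ⊕ Unit`), the `(i,j)` entry equals `c_{ij}` for
`0 ≤ i, j ≤ n`, the `(i,ψ)` and `(ψ,i)` entries equal `n − 1`, and the
`(ψ,ψ)` entry is `0`. -/
def scoreCoeffMatrix (n : ℕ) (c : Fin (n + 1) → Fin (n + 1) → ℂ) :
    Matrix (Fin (n + 1) ⊕ Unit) (Fin (n + 1) ⊕ Unit) ℂ :=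
  Matrix.of fun x y =>
    Sum.elim
      (fun i => Sum.elim (fun j => c i j) (fun _ => (n : ℂ) - 1) y)
      (fun _ => Sum.elim (fun _ => (n : ℂ) - 1) (fun _ => (0 : ℂ)) y) x

/-! On the support `S` of a solution `v`, each equation `θ_i · (C v)_i = 0` resp.
`ψ · (C v)_ψ = 0` (read with `c_ii = 0`) forces `(C v)_x = 0`. Since `v` vanishes off
`S`, this says that the principal submatrix `C_S` kills the nonzero vector `v|_S`, so
invertibility of the principal submatrices of size `≥ 2` leaves `|S| = 1`. -/

section Support

variable {ι R : Type*} [Fintype ι] [DecidableEq ι] [CommRing R]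

theorem Matrix.eq_zero_of_mulVec_eq_zero_of_support_subset (M : Matrix ι ι R) {v : ι → R}
    (S : Finset ι) (hM : IsUnit (M.submatrix ((↑) : S → ι) (↑)).det)
    (hvS : ∀ x ∉ S, v x = 0) (hv : ∀ x ∈ S, (M *ᵥ v) x = 0) : v = 0 := by
  have hw : (fun y : {a // a ∈ S} => v y) = 0 := by
    refine eq_zero_of_det_mem_nonZeroDivisors_of_mulVec_eq_zero hM.mem_nonZeroDivisors ?_
    funext x
    rw [Pi.zero_apply, ← hv x x.2]
    simp only [mulVec, dotProduct, submatrix_apply]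
    rw [sum_coe_sort S (fun y => M x y * v y)]
    exact sum_subset (subset_univ S) fun y _ hy => by rw [hvS y hy, mul_zero]
  funext x
  by_cases hx : x ∈ S
  · exact congrFun hw ⟨x, hx⟩
  · exact hvS x hx

theorem Matrix.existsUnique_ne_zero_of_mulVec_eq_zero_on_support (M : Matrix ι ι R)
    (hM : ∀ I : Finset ι, 2 ≤ I.card → IsUnit (M.submatrix ((↑) : I → ι) (↑)).det)
    {v : ι → R} (hv0 : v ≠ 0) (hv : ∀ x, v x ≠ 0 → (M *ᵥ v) x = 0) :
    ∃! x, v x ≠ 0 := by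
  classical
  obtain ⟨x, hx⟩ : ∃ x, v x ≠ 0 := Function.ne_iff.1 hv0
  refine ⟨x, hx, fun y hy => ?_⟩
  by_contra hyx
  let S := univ.filter (v · ≠ 0)
  have hcard : 2 ≤ S.card := by
    rw [← card_pair hyx]
    exact card_le_card (by simp [S, insert_subset_iff, hx, hy])
  exact hv0 <| M.eq_zero_of_mulVec_eq_zero_of_support_subset S (hM S hcard)
    (fun z hz => by simpa [S] using hz) (fun z hz => hv z (mem_filter.1 hz).2)

end Support

section ScoreCoeffMatrix

variable {n : ℕ} (c : Fin (n + 1) → Fin (n + 1) → ℂ) (θ : Fin (n + 1) → ℂ) (ψ : ℂ)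

theorem scoreCoeffMatrix_mulVec_inl (hdiag : ∀ i, c i i = 0) (i : Fin (n + 1)) :
    (scoreCoeffMatrix n c *ᵥ Sum.elim θ fun _ => ψ) (.inl i) =
      ((n : ℂ) - 1) * ψ + ∑ j ∈ univ.erase i, c i j * θ j := by
  simp only [mulVec, dotProduct, Fintype.sum_sum_type, scoreCoeffMatrix, of_apply,
    Sum.elim_inl, Sum.elim_inr, univ_unique, sum_singleton]
  rw [← add_sum_erase _ _ (mem_univ i), hdiag, zero_mul, zero_add, add_comm]

theorem scoreCoeffMatrix_mulVec_inr (u : Unit) :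
    (scoreCoeffMatrix n c *ᵥ Sum.elim θ fun _ => ψ) (.inr u) = ((n : ℂ) - 1) * ∑ i, θ i := by
  simp only [mulVec, dotProduct, Fintype.sum_sum_type, scoreCoeffMatrix, of_apply,
    Sum.elim_inl, Sum.elim_inr, univ_unique, sum_singleton, zero_mul, add_zero, mul_sum]

end ScoreCoeffMatrix

theorem solutions_z_eq_zero_general {n : ℕ}
    (c : Fin (n + 1) → Fin (n + 1) → ℂ)
    (hdiag : ∀ i, c i i = 0)
    (hC : ∀ I : Finset (Fin (n + 1) ⊕ Unit), 2 ≤ I.card →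
      IsUnit (((scoreCoeffMatrix n c).submatrix
        (fun x : {a // a ∈ I} => (x : Fin (n + 1) ⊕ Unit))
        (fun x : {a // a ∈ I} => (x : Fin (n + 1) ⊕ Unit))).det))
    (θ : Fin (n + 1) → ℂ) (ψ : ℂ)
    (hnz : Sum.elim θ (fun _ : Unit => ψ) ≠ 0)
    (heq : ∀ i, θ i * (((n : ℂ) - 1) * ψ
      + ∑ j ∈ Finset.univ.erase i, c i j * θ j) = 0)
    (heqψ : ψ * ∑ i, θ i = 0) :
    ∃! x : Fin (n + 1) ⊕ Unit, Sum.elim θ (fun _ : Unit => ψ) x ≠ 0 := by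
  refine (scoreCoeffMatrix n c).existsUnique_ne_zero_of_mulVec_eq_zero_on_support hC hnz ?_
  rintro (i | u) hx
  · rw [scoreCoeffMatrix_mulVec_inl c θ ψ hdiag]
    exact (mul_eq_zero.1 (heq i)).resolve_left hx
  · rw [scoreCoeffMatrix_mulVec_inr, (mul_eq_zero.1 heqψ).resolve_left hx, mul_zero]

/-- **Lemma 15 (solutions with `z = 0` of the homogenized score equations).**
Let `n ≥ 2` and let `c_{ij} ∈ ℂ` (`0 ≤ i, j ≤ n`) satisfy `c_{ij} = c_{ji}`
and `c_{ii} = 0`.  Assume every principal submatrix of size at least `2` of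
the associated coefficient matrix `C` is invertible.  If
`(θ_0, …, θ_n, ψ) ∈ ℂ^{n+2}` is a nonzero vector satisfying
`θ_i · ((n−1)ψ + ∑_{j ≠ i} c_{ij} θ_j) = 0` for all `i` and
`ψ · (θ_0 + ⋯ + θ_n) = 0`, then exactly one of the `n + 2` coordinates is
nonzero, i.e. the vector is a scalar multiple of a standard basis vector. -/
theorem solutions_z_eq_zero {n : ℕ} (hn : 2 ≤ n)
    (c : Fin (n + 1) → Fin (n + 1) → ℂ)
    (hsymm : ∀ i j, c i j = c j i) (hdiag : ∀ i, c i i = 0)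
    (hC : ∀ I : Finset (Fin (n + 1) ⊕ Unit), 2 ≤ I.card →
      IsUnit (((scoreCoeffMatrix n c).submatrix
        (fun x : {a // a ∈ I} => (x : Fin (n + 1) ⊕ Unit))
        (fun x : {a // a ∈ I} => (x : Fin (n + 1) ⊕ Unit))).det))
    (θ : Fin (n + 1) → ℂ) (ψ : ℂ)
    (hnz : Sum.elim θ (fun _ : Unit => ψ) ≠ 0)
    (heq : ∀ i, θ i * (((n : ℂ) - 1) * ψ
      + ∑ j ∈ Finset.univ.erase i, c i j * θ j) = 0)
    (heqψ : ψ * ∑ i, θ i = 0) :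
    ∃! x : Fin (n + 1) ⊕ Unit, Sum.elim θ (fun _ : Unit => ψ) x ≠ 0 :=
  solutions_z_eq_zero_general c hdiag hC θ ψ hnz heq heqψ
end

section
/- Let n ≥ 2 and let c_{ij} ∈ ℂ for 0 ≤ i, j ≤ n with c_{ij} = c_{ji} and c_{ii} = 0. In the formal power series ring R̂ = ℂ[[θ_0,θ_1,…,θ_n,z]], let J be the ideal generated by the n+2 elements f̄_i = z² + θ_i·((n−1) + ∑_{j ∈ {0,…,n}, j ≠ i} c_{ij}θ_j) for i = 0,1,…,n, and f̄_{n+1} = z² − (θ_0 + θ_1 + ⋯ + θ_n). Then the quotient R̂/J is a ℂ-vector space of dimension exactly 2. -/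
open Finset

open MvPowerSeries Finsupp

section helpers
variable {σ : Type*}

lemma coeff_mul_single_one (s : σ) (P Q : MvPowerSeries σ ℂ) :
    coeff (single s 1) (P * Q)
      = coeff 0 P * coeff (single s 1) Q
        + coeff (single s 1) P * coeff 0 Q := by
  classical
  rw [coeff_mul, Finsupp.antidiagonal_single, Finset.sum_map]
  have h1 : (Finset.HasAntidiagonal.antidiagonal 1 : Finset (ℕ × ℕ)) = ({(0,1),(1,0)} : Finset (ℕ × ℕ)) := rfl
  rw [h1]
  simp [Finsupp.single_zero]

lemma le_single_one_cases {s : σ} {d : σ →₀ ℕ} (h : d ≤ single s 1) :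
    d = 0 ∨ d = single s 1 := by
  classical
  by_cases hd : d s = 0
  · left
    ext a
    have ha := Finsupp.le_def.mp h a
    rw [Finsupp.single_apply] at ha
    by_cases has : s = a
    · subst has; simpa using hd
    · simp only [if_neg has] at ha; simpa using ha
  · right
    ext a
    have ha := Finsupp.le_def.mp h a
    rw [Finsupp.single_apply] at ha ⊢
    by_cases has : s = a
    · subst has; simp at ha ⊢; omega
    · simp only [if_neg has] at ha ⊢; omega

/-- the ideal of power series with vanishing constant term and `z`-coefficient -/
noncomputable def Kideal (s : σ) : Ideal (MvPowerSeries σ ℂ) where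
  carrier := {P | coeff 0 P = 0 ∧ coeff (single s 1) P = 0}
  add_mem' := by
    intro a b ha hb
    exact ⟨by simp only [map_add, ha.1, hb.1, add_zero],
      by simp only [map_add, ha.2, hb.2, add_zero]⟩
  zero_mem' := by simp
  smul_mem' := by
    intro r P hP
    refine ⟨?_, ?_⟩
    · rw [smul_eq_mul, coeff_zero_eq_constantCoeff_apply, map_mul,
        ← coeff_zero_eq_constantCoeff_apply (φ := P), hP.1, mul_zero]
    · rw [smul_eq_mul, coeff_mul_single_one, hP.1, hP.2]
      ring

lemma mem_Kideal {s : σ} {P : MvPowerSeries σ ℂ} :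
    P ∈ Kideal s ↔ coeff 0 P = 0 ∧ coeff (single s 1) P = 0 := Iff.rfl

end helpers

lemma eq_single_inr {m : ℕ} (e : (Fin m ⊕ Unit) →₀ ℕ) (h : ∀ j, e (Sum.inl j) = 0) :
    e = single (Sum.inr ()) (e (Sum.inr ())) := by
  ext a
  rcases a with j | u
  · simp [h j, Finsupp.single_apply]
  · rcases u; simp

lemma mem_span_simple {m : ℕ} (P : MvPowerSeries (Fin m ⊕ Unit) ℂ)
    (h0 : coeff 0 P = 0) (h1 : coeff (single (Sum.inr ()) 1) P = 0) :
    P ∈ Ideal.span (({X (Sum.inr ()) ^ 2} ∪ Set.range (fun i : Fin m => X (Sum.inl i))) :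
      Set (MvPowerSeries (Fin m ⊕ Unit) ℂ)) := by
  classical
  set Q : MvPowerSeries (Fin m ⊕ Unit) ℂ :=
    fun d => if ∀ j, d (Sum.inl j) = 0 then coeff (d + single (Sum.inr ()) 2) P else 0 with hQ
  set Qi : Fin m → MvPowerSeries (Fin m ⊕ Unit) ℂ :=
    fun i d => if ∀ j, j < i → d (Sum.inl j) = 0
      then coeff (d + single (Sum.inl i) 1) P else 0 with hQi
  have hQval : ∀ d, coeff d Q
      = if ∀ j, d (Sum.inl j) = 0 then coeff (d + single (Sum.inr ()) 2) P else 0 :=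
    fun d => rfl
  have hQival : ∀ (i : Fin m) d, coeff d (Qi i)
      = if ∀ j, j < i → d (Sum.inl j) = 0 then coeff (d + single (Sum.inl i) 1) P else 0 :=
    fun i d => rfl
  have key : P = X (Sum.inr ()) ^ 2 * Q + ∑ i, X (Sum.inl i) * Qi i := by
    apply MvPowerSeries.ext; intro e
    rw [map_add, map_sum]
    have hXz : coeff e (X (Sum.inr ()) ^ 2 * Q)
        = if single (Sum.inr ()) 2 ≤ e then coeff (e - single (Sum.inr ()) 2) Q else 0 := by
      rw [X_pow_eq, coeff_monomial_mul]; simp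
    have hXi : ∀ i : Fin m, coeff e (X (Sum.inl i) * Qi i)
        = if single (Sum.inl i) 1 ≤ e then coeff (e - single (Sum.inl i) 1) (Qi i) else 0 := by
      intro i
      rw [show (X (Sum.inl i) : MvPowerSeries (Fin m ⊕ Unit) ℂ)
        = monomial (single (Sum.inl i) 1) 1 from rfl, coeff_monomial_mul]
      simp
    by_cases hθ : ∀ j, e (Sum.inl j) = 0
    · have hsum : ∀ i : Fin m, coeff e (X (Sum.inl i) * Qi i) = 0 := by
        intro i
        rw [hXi i, if_neg]
        intro hle
        have := Finsupp.le_def.mp hle (Sum.inl i)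
        simp [hθ i] at this
      rw [Finset.sum_eq_zero (fun i _ => hsum i), add_zero, hXz]
      by_cases h2 : single (Sum.inr ()) 2 ≤ e
      · rw [if_pos h2, hQval]
        have hcond : ∀ j, (e - single (Sum.inr ()) 2 : (Fin m ⊕ Unit) →₀ ℕ) (Sum.inl j) = 0 := by
          intro j; rw [Finsupp.tsub_apply]; simp [hθ j]
        rw [if_pos hcond, tsub_add_cancel_of_le h2]
      · rw [if_neg h2]
        have h2' : e (Sum.inr ()) < 2 := by
          by_contra hge
          exact h2 (Finsupp.single_le_iff.mpr (by omega))
        have he := eq_single_inr e hθ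
        rcases (by omega : e (Sum.inr ()) = 0 ∨ e (Sum.inr ()) = 1) with h | h
        · rw [he, h, Finsupp.single_zero]; exact h0
        · rw [he, h]; exact h1
    · push_neg at hθ
      obtain ⟨i, hi, hlt⟩ : ∃ i : Fin m, e (Sum.inl i) ≠ 0 ∧ ∀ j, j < i → e (Sum.inl j) = 0 := by
        obtain ⟨j0, hj0⟩ := hθ
        have hsne : (Finset.univ.filter (fun j : Fin m => e (Sum.inl j) ≠ 0)).Nonempty :=
          ⟨j0, by simp [hj0]⟩
        refine ⟨(Finset.univ.filter (fun j : Fin m => e (Sum.inl j) ≠ 0)).min' hsne, ?_, ?_⟩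
        · have := Finset.min'_mem _ hsne
          simpa using this
        · intro j hj
          by_contra hne
          exact absurd hj (not_lt.mpr (Finset.min'_le _ j (by simp [hne])))
      have hz2 : coeff e (X (Sum.inr ()) ^ 2 * Q) = 0 := by
        rw [hXz]
        split_ifs with h2
        · rw [hQval, if_neg]
          intro hcond
          have := hcond i
          rw [Finsupp.tsub_apply,
            Finsupp.single_eq_of_ne Sum.inl_ne_inr] at this
          simp at this
          exact hi this
        · rfl
      rw [hz2, zero_add]
      rw [Finset.sum_eq_single i]
      · have hle : single (Sum.inl i) 1 ≤ e :=
          Finsupp.single_le_iff.mpr (Nat.one_le_iff_ne_zero.mpr hi)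
        rw [hXi i, if_pos hle, hQival, if_pos, tsub_add_cancel_of_le hle]
        intro j hj
        rw [Finsupp.tsub_apply,
          Finsupp.single_eq_of_ne (Sum.inl_injective.ne_iff.mpr (Fin.ne_of_lt hj))]
        simp [hlt j hj]
      · intro i' _ hne
        rw [hXi i']
        split_ifs with hle
        · rw [hQival, if_neg]
          intro hcond
          rcases lt_or_gt_of_ne hne with hlt' | hgt'
          · have := Finsupp.le_def.mp hle (Sum.inl i')
            rw [Finsupp.single_eq_same, hlt i' hlt'] at this
            omega
          · have := hcond i hgt'
            rw [Finsupp.tsub_apply,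
              Finsupp.single_eq_of_ne (Sum.inl_injective.ne_iff.mpr (Fin.ne_of_lt hgt'))] at this
            simp at this
            exact hi this
        · rfl
      · intro h; exact absurd (Finset.mem_univ i) h
  rw [key]
  apply Ideal.add_mem
  · exact Ideal.mul_mem_right _ _ (Ideal.subset_span (Set.mem_union_left _ rfl))
  · exact Ideal.sum_mem _ (fun i _ =>
      Ideal.mul_mem_right _ _ (Ideal.subset_span (Set.mem_union_right _ ⟨i, rfl⟩)))

lemma coeff_X_sq_zero {σ : Type*} (s : σ) :
    coeff (0 : σ →₀ ℕ) (X s ^ 2 : MvPowerSeries σ ℂ) = 0 := by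
  classical
  rw [X_pow_eq, coeff_monomial, if_neg]
  intro h
  exact two_ne_zero (Finsupp.single_eq_zero.mp h.symm)

lemma coeff_X_sq_single {σ : Type*} (s t : σ) :
    coeff (single t 1) (X s ^ 2 : MvPowerSeries σ ℂ) = 0 := by
  classical
  rw [X_pow_eq, coeff_monomial, if_neg]
  simp [Finsupp.single_eq_single_iff]

lemma coeff_single_X_mul {σ : Type*} (s t : σ) (h : s ≠ t)
    (φ : MvPowerSeries σ ℂ) :
    coeff (single t 1) (X s * φ) = 0 := by
  classical
  rw [show (X s : MvPowerSeries σ ℂ) * φ = monomial (single s 1) 1 * φ from rfl,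
    coeff_monomial_mul, if_neg]
  rw [Finsupp.single_le_iff, Finsupp.single_eq_of_ne h]
  omega



set_option maxHeartbeats 1000000 in
/-- **Lemma 16(2) (multiplicity of the standard point `e_{n+1}`).**
Let `n ≥ 2` and let `c_{ij} ∈ ℂ` (`0 ≤ i, j ≤ n`) satisfy `c_{ij} = c_{ji}`
and `c_{ii} = 0`.  In the formal power series ring
`R̂ = ℂ[[θ_0, θ_1, …, θ_n, z]]` (the variables are indexed by
`Fin (n+1) ⊕ Unit`, with `Sum.inl i ↦ θ_i` and `Sum.inr () ↦ z`), let `J`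
be the ideal generated by
`f̄_i = z² + θ_i ((n−1) + ∑_{j≠i} c_{ij} θ_j)` for `0 ≤ i ≤ n` and
`f̄_{n+1} = z² − (θ_0 + θ_1 + ⋯ + θ_n)`.
Then `R̂/J` is a `ℂ`-vector space of dimension exactly `2`. -/
theorem multiplicity_at_elast {n : ℕ} (hn : 2 ≤ n)
    (c : Fin (n + 1) → Fin (n + 1) → ℂ)
    (hsymm : ∀ i j, c i j = c j i) (hdiag : ∀ i, c i i = 0) :
    Module.finrank ℂ
      (MvPowerSeries (Fin (n + 1) ⊕ Unit) ℂ ⧸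
        Ideal.span
          (({(MvPowerSeries.X (Sum.inr ())) ^ 2
              - ∑ i : Fin (n + 1), MvPowerSeries.X (Sum.inl i)}
            : Set (MvPowerSeries (Fin (n + 1) ⊕ Unit) ℂ))
          ∪ Set.range (fun i : Fin (n + 1) =>
              (MvPowerSeries.X (Sum.inr ())) ^ 2
                + MvPowerSeries.X (Sum.inl i)
                  * (MvPowerSeries.C ((n : ℂ) - 1)
                      + ∑ j ∈ Finset.univ.erase i,
                          MvPowerSeries.C (c i j)
                            * MvPowerSeries.X (Sum.inl j)))))
      = 2 := by
  classical
  set J : Ideal (MvPowerSeries (Fin (n + 1) ⊕ Unit) ℂ) := Ideal.span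
          (({(MvPowerSeries.X (Sum.inr ())) ^ 2
              - ∑ i : Fin (n + 1), MvPowerSeries.X (Sum.inl i)}
            : Set (MvPowerSeries (Fin (n + 1) ⊕ Unit) ℂ))
          ∪ Set.range (fun i : Fin (n + 1) =>
              (MvPowerSeries.X (Sum.inr ())) ^ 2
                + MvPowerSeries.X (Sum.inl i)
                  * (MvPowerSeries.C ((n : ℂ) - 1)
                      + ∑ j ∈ Finset.univ.erase i,
                          MvPowerSeries.C (c i j)
                            * MvPowerSeries.X (Sum.inl j)))) with hJdef
  set A : Fin (n + 1) → MvPowerSeries (Fin (n + 1) ⊕ Unit) ℂ :=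
    fun i => MvPowerSeries.C ((n : ℂ) - 1)
      + ∑ j ∈ Finset.univ.erase i, MvPowerSeries.C (c i j) * MvPowerSeries.X (Sum.inl j)
    with hA
  -- generators
  have hgZ : X (Sum.inr ()) ^ 2 - ∑ i : Fin (n+1), X (Sum.inl i) ∈ J :=
    Ideal.subset_span (Set.mem_union_left _ rfl)
  have hg : ∀ i : Fin (n+1), X (Sum.inr ()) ^ 2 + X (Sum.inl i) * A i ∈ J :=
    fun i => Ideal.subset_span (Set.mem_union_right _ ⟨i, rfl⟩)
  -- constant coefficients
  have hccA : ∀ i, constantCoeff (A i) = (n : ℂ) - 1 := by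
    intro i
    simp [hA, constantCoeff_X]
  have hn1 : ((n : ℂ) - 1) ≠ 0 := by
    have : (n : ℂ) ≠ 1 := by
      exact_mod_cast (by omega : (n : ℕ) ≠ 1)
    exact sub_ne_zero.mpr this
  have hAunit : ∀ i, IsUnit (A i) := fun i =>
    isUnit_iff_constantCoeff.mpr (by rw [hccA]; exact isUnit_iff_ne_zero.mpr hn1)
  choose u hu using hAunit
  set B : Fin (n + 1) → MvPowerSeries (Fin (n + 1) ⊕ Unit) ℂ :=
    fun i => ((u i)⁻¹ : (MvPowerSeries (Fin (n + 1) ⊕ Unit) ℂ)ˣ) with hB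
  have hBA : ∀ i, B i * A i = 1 := by
    intro i
    rw [hB, ← hu i]
    exact_mod_cast (u i).inv_mul
  have hccB : ∀ i, constantCoeff (B i) = ((n : ℂ) - 1)⁻¹ := by
    intro i
    have h := congrArg (constantCoeff) (hBA i)
    rw [map_mul, map_one, hccA] at h
    exact eq_inv_of_mul_eq_one_left h
  -- X z ^ 2 ∈ J
  have hUcc : constantCoeff (1 + ∑ i, B i) ≠ 0 := by
    rw [map_add, map_one, map_sum]
    simp only [hccB]
    rw [Finset.sum_const, Finset.card_univ, Fintype.card_fin, nsmul_eq_mul]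
    have h2n : (2 : ℂ) * n ≠ 0 := by
      have : (n : ℂ) ≠ 0 := by exact_mod_cast (by omega : (n : ℕ) ≠ 0)
      simpa using this
    intro h
    apply h2n
    have := congrArg (· * ((n : ℂ) - 1)) h
    simp only [add_mul, one_mul, zero_mul, mul_assoc, inv_mul_cancel₀ hn1, mul_one] at this
    push_cast at this
    linear_combination this
  have hUunit : IsUnit (1 + ∑ i, B i) := isUnit_iff_constantCoeff.mpr
    (isUnit_iff_ne_zero.mpr hUcc)
  have hBg : ∀ i, B i * (X (Sum.inr ()) ^ 2 + X (Sum.inl i) * A i)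
      = B i * X (Sum.inr ()) ^ 2 + X (Sum.inl i) := by
    intro i
    rw [mul_add, show B i * (X (Sum.inl i) * A i)
      = (B i * A i) * X (Sum.inl i) by ring, hBA i, one_mul]
  have hkey : (1 + ∑ i, B i) * X (Sum.inr ()) ^ 2
      = (X (Sum.inr ()) ^ 2 - ∑ i : Fin (n+1), X (Sum.inl i))
        + ∑ i, B i * (X (Sum.inr ()) ^ 2 + X (Sum.inl i) * A i) := by
    simp only [hBg]
    rw [Finset.sum_add_distrib, ← Finset.sum_mul]
    ring
  have hz2 : (X (Sum.inr ()) ^ 2 : MvPowerSeries (Fin (n + 1) ⊕ Unit) ℂ) ∈ J := by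
    have hmem : (1 + ∑ i, B i) * X (Sum.inr ()) ^ 2 ∈ J := by
      rw [hkey]
      exact J.add_mem hgZ (Ideal.sum_mem _ fun i _ => J.mul_mem_left _ (hg i))
    obtain ⟨w, hw⟩ := hUunit
    have h2 := J.mul_mem_left (↑w⁻¹) hmem
    rwa [← hw, ← mul_assoc, Units.inv_mul, one_mul] at h2
  have hX : ∀ i : Fin (n+1), (X (Sum.inl i) : MvPowerSeries (Fin (n + 1) ⊕ Unit) ℂ) ∈ J := by
    intro i
    have hdiff : (X (Sum.inr ()) ^ 2 + X (Sum.inl i) * A i) - X (Sum.inr ()) ^ 2 ∈ J :=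
      J.sub_mem (hg i) hz2
    have h2 := J.mul_mem_left (B i) hdiff
    rwa [add_sub_cancel_left, show B i * (X (Sum.inl i) * A i)
      = (B i * A i) * X (Sum.inl i) by ring, hBA i, one_mul] at h2
  have hspan : Ideal.span (({X (Sum.inr ()) ^ 2}
      ∪ Set.range (fun i : Fin (n+1) => X (Sum.inl i))) :
        Set (MvPowerSeries (Fin (n + 1) ⊕ Unit) ℂ)) ≤ J := by
    rw [Ideal.span_le]
    rintro x (hx | ⟨i, rfl⟩)
    · rw [Set.mem_singleton_iff] at hx
      rw [hx]; exact hz2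
    · exact hX i
  -- J ≤ Kideal
  have hJK : J ≤ Kideal (Sum.inr () : Fin (n+1) ⊕ Unit) := by
    rw [hJdef, Ideal.span_le]
    rintro x (hx | ⟨i, rfl⟩)
    · rw [Set.mem_singleton_iff] at hx
      subst hx
      rw [SetLike.mem_coe, mem_Kideal]
      constructor
      · rw [map_sub, map_sum, coeff_X_sq_zero]
        simp [coeff_zero_X]
      · rw [map_sub, map_sum, coeff_X_sq_single]
        simp [coeff_X, Finsupp.single_eq_single_iff]
    · rw [SetLike.mem_coe, mem_Kideal]
      constructor
      · rw [map_add, coeff_X_sq_zero, coeff_zero_X_mul, add_zero]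
      · rw [map_add, coeff_X_sq_single,
          coeff_single_X_mul _ _ Sum.inl_ne_inr, add_zero]
  -- the linear map
  set f : MvPowerSeries (Fin (n + 1) ⊕ Unit) ℂ →ₗ[ℂ] (Fin 2 → ℂ) :=
    LinearMap.pi ![coeff 0, coeff (single (Sum.inr ()) 1)] with hf
  have hfapply : ∀ P, f P = ![coeff 0 P, coeff (single (Sum.inr ()) 1) P] := by
    intro P
    funext j
    fin_cases j <;> simp [hf]
  have hker : J.restrictScalars ℂ = LinearMap.ker f := by
    ext P
    rw [Submodule.restrictScalars_mem, LinearMap.mem_ker]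
    constructor
    · intro hP
      have := hJK hP
      rw [mem_Kideal] at this
      rw [hfapply]
      funext j
      fin_cases j <;> simp [this.1, this.2]
    · intro hP
      rw [hfapply] at hP
      have h0 : coeff 0 P = 0 := by
        have := congrFun hP 0; simpa using this
      have h1 : coeff (single (Sum.inr ()) 1) P = 0 := by
        have := congrFun hP 1; simpa using this
      exact hspan (mem_span_simple P h0 h1)
  have hsurj : Function.Surjective f := by
    intro v
    refine ⟨MvPowerSeries.C (v 0) + MvPowerSeries.C (v 1) * X (Sum.inr ()), ?_⟩
    have hc0 : coeff (0 : (Fin (n+1) ⊕ Unit) →₀ ℕ)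
        (MvPowerSeries.C (v 0)
          + MvPowerSeries.C (v 1) * X (Sum.inr ())) = v 0 := by
      rw [map_add, coeff_zero_mul_X, add_zero, coeff_zero_C]
    have hc1 : coeff (single (Sum.inr ()) 1 : (Fin (n+1) ⊕ Unit) →₀ ℕ)
        (MvPowerSeries.C (v 0)
          + MvPowerSeries.C (v 1) * X (Sum.inr ())) = v 1 := by
      rw [map_add, coeff_mul_single_one]
      simp [MvPowerSeries.coeff_C, coeff_X, coeff_zero_X, Finsupp.single_eq_zero]
    rw [hfapply, hc0, hc1]
    funext j
    fin_cases j <;> simp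
  calc Module.finrank ℂ (MvPowerSeries (Fin (n + 1) ⊕ Unit) ℂ ⧸ J)
      = Module.finrank ℂ
          (MvPowerSeries (Fin (n + 1) ⊕ Unit) ℂ ⧸ (J.restrictScalars ℂ)) :=
        (LinearEquiv.finrank_eq (Submodule.Quotient.restrictScalarsEquiv ℂ J)).symm
    _ = Module.finrank ℂ (Fin 2 → ℂ) := by
        rw [hker]
        exact LinearEquiv.finrank_eq (f.quotKerEquivOfSurjective hsurj)
    _ = 2 := Module.finrank_fin_fun ℂ
end
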